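/- arXiv:math/0507264 — 6 statements merged into one kernel-verified Lean document; each statement's English description precedes it below -/
import Mathlib

section
/- Let b > 0 and let u, v be real functions that are C² on (0,b) with u(t) ≥ v(t) for all t ∈ (0,b). Assume max{u'(t), v'(t)} > 0 for every t ∈ (0,b), and assume the main hypothesis: whenever u(t) = v(s) with 0 < t < s < b, one has u''(t) ≤ v''(s). Then either u(t) > v(t) for all t ∈ (0,b), or u(t) = v(t) for all t ∈ (0,b). -/
/-!
At a point `t₀` where `u` touches `v` from above, `u' = v' > 0`, so near `t₀` one can write
`u = v ∘ φ` with `φ` of class `C²`, `φ(t₀) = t₀` and `φ(t) ≥ t`. Where `φ(t) > t`, the hypothesis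
`u''(t) ≤ v''(φ t)` together with `u'' = v''(φ) φ'² + v'(φ) φ''` yields the linear differential
inequality `φ'' ≤ C |φ' - 1|`, and a Gronwall argument for `h = φ - id`, which is `≥ 0` with a zero
at `t₀`, shows `h = 0` near `t₀`. Hence `{u = v}` is open in `(0, b)`; it is also closed, so by
connectedness it is empty or everything.
-/

open Set Filter Topology

theorem nonpos_of_deriv_le_mul_of_pos {f f' : ℝ → ℝ} {a b C : ℝ}
    (hf : ContinuousOn f (Icc a b)) (hf' : ∀ x ∈ Ico a b, HasDerivWithinAt f (f' x) (Ici x) x)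
    (ha : f a ≤ 0) (bound : ∀ x ∈ Ico a b, 0 < f x → f' x ≤ C * f x) :
    ∀ x ∈ Icc a b, f x ≤ 0 := by
  -- compare `f` with the barriers `ε e^{(C+1)(x-a)}`, which grow strictly faster than `f` can
  have barrier : ∀ ε > 0, ∀ x ∈ Icc a b, f x ≤ ε * Real.exp ((C + 1) * (x - a)) := by
    intro ε hε
    have hB : ∀ x, HasDerivAt (fun y => ε * Real.exp ((C + 1) * (y - a)))
        ((C + 1) * (ε * Real.exp ((C + 1) * (x - a)))) x := fun x =>
      ((((hasDerivAt_id' x).sub_const a).const_mul (C + 1)).exp.const_mul ε).congr_deriv (by ring)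
    refine image_le_of_deriv_right_lt_deriv_boundary' hf hf' (by simpa using ha.trans hε.le)
      (fun x _ => (hB x).continuousAt.continuousWithinAt) (fun x _ => (hB x).hasDerivWithinAt)
      fun x hx hfx => ?_
    have hpos : 0 < f x := hfx ▸ by positivity
    have := bound x hx hpos
    rw [hfx] at this hpos
    linarith
  intro x hx
  by_contra! hpos
  have := barrier (f x / 2 / Real.exp ((C + 1) * (x - a))) (by positivity) x hx
  rw [div_mul_cancel₀ _ (Real.exp_pos _).ne'] at this
  linarith

theorem eq_zero_of_deriv_deriv_le_mul_abs {h h' h'' : ℝ → ℝ} {a b C : ℝ}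
    (hh : ∀ x ∈ Icc a b, HasDerivAt h (h' x) x) (hh' : ∀ x ∈ Icc a b, HasDerivAt h' (h'' x) x)
    (hnonneg : ∀ x ∈ Icc a b, 0 ≤ h x) (ha : h a = 0) (ha' : h' a ≤ 0)
    (bound : ∀ x ∈ Icc a b, 0 < h x → h'' x ≤ C * |h' x|) :
    ∀ x ∈ Icc a b, h x = 0 := by
  -- a zero of `h ≥ 0` inside `(a, b)` is a minimum, so `h' > 0` forces `h > 0`
  have pos_of_deriv_pos : ∀ x ∈ Ico a b, 0 < h' x → 0 < h x := by
    rintro x ⟨hax, hxb⟩ hx'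
    rcases hax.eq_or_lt with rfl | hax
    · exact absurd hx' ha'.not_gt
    refine (hnonneg x ⟨hax.le, hxb.le⟩).lt_of_ne fun hx0 => hx'.ne' ?_
    refine IsLocalMin.hasDerivAt_eq_zero ?_ (hh x ⟨hax.le, hxb.le⟩)
    filter_upwards [Icc_mem_nhds hax hxb] with y hy
    exact hx0 ▸ hnonneg y hy
  have deriv_nonpos : ∀ x ∈ Icc a b, h' x ≤ 0 :=
    nonpos_of_deriv_le_mul_of_pos (fun x hx => (hh' x hx).continuousAt.continuousWithinAt)
      (fun x hx => (hh' x (Ico_subset_Icc_self hx)).hasDerivWithinAt) ha'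
      fun x hx hx' => by
        simpa [abs_of_pos hx'] using
          bound x (Ico_subset_Icc_self hx) (pos_of_deriv_pos x hx hx')
  have anti : AntitoneOn h (Icc a b) := by
    refine antitoneOn_of_hasDerivWithinAt_nonpos (f' := h') (convex_Icc a b)
      (fun x hx => (hh x hx).continuousAt.continuousWithinAt) (fun x hx => ?_) fun x hx => ?_
    all_goals rw [interior_Icc] at hx
    · exact (hh x (Ioo_subset_Icc_self hx)).hasDerivWithinAt
    · exact deriv_nonpos x (Ioo_subset_Icc_self hx)
  intro x hx
  exact le_antisymm (ha ▸ anti ⟨le_rfl, hx.1.trans hx.2⟩ hx hx.1) (hnonneg x hx)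

theorem eventuallyEq_zero_of_deriv_deriv_le_mul_abs {h h' h'' : ℝ → ℝ} {t₀ C : ℝ}
    (hh : ∀ᶠ x in 𝓝 t₀, HasDerivAt h (h' x) x) (hh' : ∀ᶠ x in 𝓝 t₀, HasDerivAt h' (h'' x) x)
    (hnonneg : ∀ᶠ x in 𝓝 t₀, 0 ≤ h x) (h₀ : h t₀ = 0)
    (bound : ∀ᶠ x in 𝓝 t₀, 0 < h x → h'' x ≤ C * |h' x|) :
    h =ᶠ[𝓝 t₀] 0 := by
  have h₀' : h' t₀ = 0 :=
    IsLocalMin.hasDerivAt_eq_zero (hnonneg.mono fun x hx => h₀ ▸ hx) hh.self_of_nhds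
  obtain ⟨ε, hε, hall⟩ :=
    (nhds_basis_Icc_pos t₀).eventually_iff.1 (hh.and (hh'.and (hnonneg.and bound)))
  have right : ∀ x ∈ Icc t₀ (t₀ + ε), h x = 0 := by
    have sub : Icc t₀ (t₀ + ε) ⊆ Icc (t₀ - ε) (t₀ + ε) := Icc_subset_Icc_left (by linarith)
    exact eq_zero_of_deriv_deriv_le_mul_abs (fun x hx => (hall (sub hx)).1)
      (fun x hx => (hall (sub hx)).2.1) (fun x hx => (hall (sub hx)).2.2.1) h₀ h₀'.le
      fun x hx => (hall (sub hx)).2.2.2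
  have left : ∀ x ∈ Icc (-t₀) (-t₀ + ε), h (-x) = 0 := by
    have sub : ∀ x ∈ Icc (-t₀) (-t₀ + ε), -x ∈ Icc (t₀ - ε) (t₀ + ε) := fun x hx =>
      ⟨by linarith [hx.2], by linarith [hx.1]⟩
    refine eq_zero_of_deriv_deriv_le_mul_abs (h' := fun x => -h' (-x)) (h'' := fun x => h'' (-x))
      (C := C) (fun x hx => ?_) (fun x hx => ?_) (fun x hx => (hall (sub x hx)).2.2.1)
      (by simpa using h₀) (by simp [h₀']) fun x hx hpos => by
        simpa using (hall (sub x hx)).2.2.2 hpos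
    · exact ((hall (sub x hx)).1.comp x (hasDerivAt_neg x)).congr_deriv (mul_neg_one _)
    · exact ((hall (sub x hx)).2.1.comp x (hasDerivAt_neg x)).neg.congr_deriv (by ring)
  filter_upwards [Icc_mem_nhds (sub_lt_self t₀ hε) (lt_add_of_pos_right t₀ hε)] with x hx
  rcases le_total t₀ x with hx₀ | hx₀
  · exact right x ⟨hx₀, hx.2⟩
  · simpa using left (-x) ⟨neg_le_neg hx₀, by linarith [hx.1]⟩

theorem ContDiffAt.exists_eventually_comp_eq {u v : ℝ → ℝ} {t₀ : ℝ} {n : WithTop ℕ∞}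
    (hu : ContDiffAt ℝ n u t₀) (hv : ContDiffAt ℝ n v t₀) (hn : n ≠ 0) (hv' : deriv v t₀ ≠ 0)
    (h : u t₀ = v t₀) :
    ∃ φ : ℝ → ℝ, ContDiffAt ℝ n φ t₀ ∧ φ t₀ = t₀ ∧ ∀ᶠ t in 𝓝 t₀, v (φ t) = u t := by
  have hderiv : HasFDerivAt v _ t₀ :=
    ((hv.differentiableAt hn).hasDerivAt).hasFDerivAt_equiv hv'
  refine ⟨hv.localInverse hderiv hn ∘ u, ?_, ?_, ?_⟩
  · exact (h ▸ hv.to_localInverse hderiv hn).comp t₀ hu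
  · simp [h, hv.localInverse_apply_image hderiv hn]
  · exact hu.continuousAt.eventually
      (h ▸ (hv.hasStrictFDerivAt' hderiv hn).eventually_right_inverse)

theorem ContDiffAt.eventually_hasDerivAt_deriv_deriv {f : ℝ → ℝ} {x : ℝ} (hf : ContDiffAt ℝ 2 f x) :
    ∀ᶠ y in 𝓝 x, HasDerivAt f (deriv f y) y ∧ HasDerivAt (deriv f) (deriv (deriv f) y) y := by
  filter_upwards [hf.eventually (by simp)] with y hy
  exact ⟨(hy.differentiableAt (by norm_num)).hasDerivAt,
    ((hy.derivWithin (m := 1) (by norm_num)).differentiableAt one_ne_zero).hasDerivAt⟩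

theorem eventually_deriv_deriv_eq_of_eventually_comp_eq {u v φ : ℝ → ℝ} {t₀ : ℝ}
    (hcomp : ∀ᶠ t in 𝓝 t₀, v (φ t) = u t)
    (hv : ∀ᶠ t in 𝓝 t₀, HasDerivAt v (deriv v (φ t)) (φ t) ∧
      HasDerivAt (deriv v) (deriv (deriv v) (φ t)) (φ t))
    (hφ : ∀ᶠ t in 𝓝 t₀, HasDerivAt φ (deriv φ t) t ∧ HasDerivAt (deriv φ) (deriv (deriv φ) t) t) :
    ∀ᶠ t in 𝓝 t₀, deriv (deriv u) t =
      deriv (deriv v) (φ t) * deriv φ t ^ 2 + deriv v (φ t) * deriv (deriv φ) t := by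
  have first : ∀ᶠ t in 𝓝 t₀, deriv u t = deriv v (φ t) * deriv φ t := by
    filter_upwards [hcomp.eventually_nhds, hv, hφ] with t hct hvt hφt
    exact ((hvt.1.comp t hφt.1).congr_of_eventuallyEq (hct.mono fun _ => Eq.symm)).deriv
  filter_upwards [first.eventually_nhds, hv, hφ] with t hft hvt hφt
  refine (((hvt.2.comp t hφt.1).mul hφt.2).congr_of_eventuallyEq hft).deriv.trans ?_
  rw [Function.comp_apply]
  ring

theorem le_abs_mul_abs_sub_one_of_mul_sq_add_le {B D p q : ℝ} (hD : 0 < D)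
    (h : B * p ^ 2 + D * q ≤ B) : q ≤ |B * (1 + p) / D| * |p - 1| :=
  calc q ≤ B * (1 + p) / D * (1 - p) := by
        rw [div_mul_eq_mul_div, le_div_iff₀ hD]; nlinarith
    _ ≤ |B * (1 + p) / D * (1 - p)| := le_abs_self _
    _ = |B * (1 + p) / D| * |p - 1| := by rw [abs_mul, abs_sub_comm]

theorem exists_eventually_deriv_deriv_le_mul_abs_sub_one {v φ : ℝ → ℝ} {t₀ : ℝ}
    (hv : ContDiffAt ℝ 2 v t₀) (hφ : ContDiffAt ℝ 2 φ t₀) (hφ₀ : φ t₀ = t₀)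
    (hc : 0 < deriv v t₀) :
    ∃ C, ∀ᶠ t in 𝓝 t₀, deriv (deriv v) (φ t) * deriv φ t ^ 2 + deriv v (φ t) * deriv (deriv φ) t ≤
      deriv (deriv v) (φ t) → deriv (deriv φ) t ≤ C * |deriv φ t - 1| := by
  set F : ℝ → ℝ := fun t => deriv (deriv v) (φ t) * (1 + deriv φ t) / deriv v (φ t)
  have hv' : ContDiffAt ℝ 1 (deriv v) t₀ := hv.derivWithin (by norm_num)
  have hv'' : ContinuousAt (deriv (deriv v)) t₀ :=
    (hv'.derivWithin (m := 0) (by norm_num)).continuousAt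
  have hφ' : ContinuousAt (deriv φ) t₀ := (hφ.derivWithin (m := 1) (by norm_num)).continuousAt
  have hvφ : ContinuousAt (fun t => deriv v (φ t)) t₀ :=
    hv'.continuousAt.comp_of_eq hφ.continuousAt hφ₀
  have hF : ContinuousAt F t₀ :=
    ((hv''.comp_of_eq hφ.continuousAt hφ₀).mul (continuousAt_const.add hφ')).div hvφ
      (by simpa [hφ₀] using hc.ne')
  refine ⟨|F t₀| + 1, ?_⟩
  filter_upwards [hF.abs.eventually_lt continuousAt_const (lt_add_one _),
    continuousAt_const.eventually_lt hvφ (hφ₀ ▸ hc)] with t hFt hvt hineq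
  exact (le_abs_mul_abs_sub_one_of_mul_sq_add_le hvt hineq).trans
    (mul_le_mul_of_nonneg_right hFt.le (abs_nonneg _))

theorem eventually_le_of_comp_eq_of_le {u v φ : ℝ → ℝ} {t₀ : ℝ}
    (hv : ∀ᶠ t in 𝓝 t₀, 0 < deriv v t) (hφ : Tendsto φ (𝓝 t₀) (𝓝 t₀))
    (hcomp : ∀ᶠ t in 𝓝 t₀, v (φ t) = u t) (huv : ∀ᶠ t in 𝓝 t₀, v t ≤ u t) :
    ∀ᶠ t in 𝓝 t₀, t ≤ φ t := by
  obtain ⟨ε, hε, hpos⟩ := (nhds_basis_Icc_pos t₀).eventually_iff.1 hv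
  have hmono : StrictMonoOn v (Icc (t₀ - ε) (t₀ + ε)) :=
    strictMonoOn_of_deriv_pos (convex_Icc _ _)
      (fun x hx =>
        (differentiableAt_of_deriv_ne_zero (hpos hx).ne').continuousAt.continuousWithinAt)
      fun x hx => hpos (interior_subset hx)
  have hnhds : Icc (t₀ - ε) (t₀ + ε) ∈ 𝓝 t₀ :=
    Icc_mem_nhds (sub_lt_self t₀ hε) (lt_add_of_pos_right t₀ hε)
  filter_upwards [hnhds, hφ.eventually hnhds, hcomp, huv] with t ht hφt hct huvt
  by_contra! hlt
  linarith [hmono hφt ht hlt]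

theorem eventuallyEq_of_eq_of_deriv_deriv_le {u v : ℝ → ℝ} {U : Set ℝ} {t₀ : ℝ}
    (hU : U ∈ 𝓝 t₀) (hu : ContDiffAt ℝ 2 u t₀) (hv : ContDiffAt ℝ 2 v t₀)
    (huv : ∀ t ∈ U, v t ≤ u t) (hpos : 0 < max (deriv u t₀) (deriv v t₀))
    (hmain : ∀ t ∈ U, ∀ s ∈ U, t < s → u t = v s → deriv (deriv u) t ≤ deriv (deriv v) s)
    (h₀ : u t₀ = v t₀) :
    u =ᶠ[𝓝 t₀] v := by
  have hu' : HasDerivAt u (deriv u t₀) t₀ := (hu.differentiableAt two_ne_zero).hasDerivAt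
  have hv' : HasDerivAt v (deriv v t₀) t₀ := (hv.differentiableAt two_ne_zero).hasDerivAt
  have hderiv : deriv u t₀ = deriv v t₀ := by
    have hmin : IsLocalMin (fun t => u t - v t) t₀ := by
      filter_upwards [hU] with t ht
      simpa [h₀] using huv t ht
    exact sub_eq_zero.1 (hmin.hasDerivAt_eq_zero (hu'.sub hv'))
  have hc : 0 < deriv v t₀ := by simpa [hderiv] using hpos
  obtain ⟨φ, hφ, hφ₀, hcomp⟩ := hu.exists_eventually_comp_eq hv two_ne_zero hc.ne' h₀
  have hφt : Tendsto φ (𝓝 t₀) (𝓝 t₀) := by simpa [hφ₀] using hφ.continuousAt.tendsto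
  have hvpos : ∀ᶠ t in 𝓝 t₀, 0 < deriv v t :=
    continuousAt_const.eventually_lt (hv.derivWithin (m := 1) (by norm_num)).continuousAt hc
  have chain := eventually_deriv_deriv_eq_of_eventually_comp_eq hcomp
    (hφt.eventually hv.eventually_hasDerivAt_deriv_deriv) hφ.eventually_hasDerivAt_deriv_deriv
  obtain ⟨C, hC⟩ := exists_eventually_deriv_deriv_le_mul_abs_sub_one hv hφ hφ₀ hc
  have hφ_eq : (fun t => φ t - t) =ᶠ[𝓝 t₀] 0 := by
    refine eventuallyEq_zero_of_deriv_deriv_le_mul_abs (h' := fun t => deriv φ t - 1)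
      (h'' := deriv (deriv φ)) (C := C) ?_ ?_ ?_ (by simp [hφ₀]) ?_
    · exact hφ.eventually_hasDerivAt_deriv_deriv.mono fun t ht => ht.1.sub (hasDerivAt_id' t)
    · exact hφ.eventually_hasDerivAt_deriv_deriv.mono fun t ht => ht.2.sub_const 1
    · exact (eventually_le_of_comp_eq_of_le hvpos hφt hcomp (eventually_of_mem hU huv)).mono
        fun t ht => sub_nonneg.2 ht
    · filter_upwards [hU, hφt.eventually hU, hcomp, chain, hC] with t ht hφU hct hch hCt hlt
      exact hCt (hch ▸ hmain t ht (φ t) hφU (sub_pos.1 hlt) hct.symm)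
  filter_upwards [hφ_eq, hcomp] with t ht hct
  rw [← hct, sub_eq_zero.1 ht]

theorem IsPreconnected.eqOn_of_eq_imp_eventuallyEq {α β : Type*} [TopologicalSpace α]
    [TopologicalSpace β] [T2Space β] {s : Set α} {f g : α → β} (hs : IsPreconnected s)
    (hso : IsOpen s) (hf : ContinuousOn f s) (hg : ContinuousOn g s)
    (hloc : ∀ x ∈ s, f x = g x → f =ᶠ[𝓝 x] g) {x₀ : α} (hx₀ : x₀ ∈ s) (h₀ : f x₀ = g x₀) :
    EqOn f g s := by
  have hne : IsOpen (s ∩ (fun x => (f x, g x)) ⁻¹' (diagonal β)ᶜ) :=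
    (hf.prodMk hg).isOpen_inter_preimage hso isClosed_diagonal.isOpen_compl
  have hsub := hs.subset_left_of_subset_union (u := interior {x | f x = g x}) isOpen_interior hne
    (disjoint_left.2 fun x hx hx' => hx'.2 (interior_subset (s := {x | f x = g x}) hx))
    (fun x hx => (em (f x = g x)).imp (fun h => mem_interior_iff_mem_nhds.2 (hloc x hx h))
      fun h => ⟨hx, h⟩)
    ⟨x₀, hx₀, mem_interior_iff_mem_nhds.2 (hloc x₀ hx₀ h₀)⟩
  exact fun x hx => interior_subset (s := {x | f x = g x}) (hsub hx)

theorem stmt_1_general (b : ℝ) (u v : ℝ → ℝ)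
    (hu2 : ContDiffOn ℝ 2 u (Set.Ioo 0 b)) (hv2 : ContDiffOn ℝ 2 v (Set.Ioo 0 b))
    (huv : ∀ t ∈ Set.Ioo 0 b, v t ≤ u t)
    (hmono : ∀ t ∈ Set.Ioo 0 b, 0 < max (deriv u t) (deriv v t))
    (hmain : ∀ t s : ℝ, 0 < t → t < s → s < b → u t = v s →
      deriv (deriv u) t ≤ deriv (deriv v) s) :
    (∀ t ∈ Set.Ioo 0 b, v t < u t) ∨ (∀ t ∈ Set.Ioo 0 b, u t = v t) := by
  by_cases hex : ∃ t₀ ∈ Ioo 0 b, u t₀ = v t₀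
  · obtain ⟨t₀, ht₀, h₀⟩ := hex
    refine Or.inr (isPreconnected_Ioo.eqOn_of_eq_imp_eventuallyEq isOpen_Ioo hu2.continuousOn
      hv2.continuousOn (fun t ht h => ?_) ht₀ h₀)
    have hU : Ioo 0 b ∈ 𝓝 t := isOpen_Ioo.mem_nhds ht
    exact eventuallyEq_of_eq_of_deriv_deriv_le hU ((hu2 t ht).contDiffAt hU)
      ((hv2 t ht).contDiffAt hU) huv (hmono t ht)
      (fun t ht s hs hts h => hmain t s ht.1 hts hs.2 h) h
  · exact Or.inl fun t ht => (huv t ht).lt_of_ne fun h => hex ⟨t, ht, h.symm⟩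

/-- Lemma 2.1 of Li–Nirenberg, a variation of the strong maximum principle. -/
theorem stmt_1 (b : ℝ) (hb : 0 < b) (u v : ℝ → ℝ)
    (hu2 : ContDiffOn ℝ 2 u (Set.Ioo 0 b)) (hv2 : ContDiffOn ℝ 2 v (Set.Ioo 0 b))
    (huv : ∀ t ∈ Set.Ioo 0 b, v t ≤ u t)
    (hmono : ∀ t ∈ Set.Ioo 0 b, 0 < max (deriv u t) (deriv v t))
    (hmain : ∀ t s : ℝ, 0 < t → t < s → s < b → u t = v s →
      deriv (deriv u) t ≤ deriv (deriv v) s) :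
    (∀ t ∈ Set.Ioo 0 b, v t < u t) ∨ (∀ t ∈ Set.Ioo 0 b, u t = v t) :=
  stmt_1_general b u v hu2 hv2 huv hmono hmain
end

section
/- Let c > 0, let f : (0,∞) → ℝ be bounded on every compact subset of (0,∞), and let u, w be real functions on [0,c) that are continuously differentiable on [0,c), positive on (0,c), twice differentiable on (0,c), and satisfy u''(t) = f(u(t)) and w''(t) = f(w(t)) for all t ∈ (0,c). Assume u(0) = w(0) = 0, u'(0) = w'(0), and u'(t) > 0 for all t ∈ (0,c). Then u(t) = w(t) for all t ∈ [0,c). -/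
/-!
Since `u' > 0`, `u` has an inverse `v` on each `[0, d]` with `d < c`. Near a time `b` at which
`u` and `w` agree to first order, `τ = v ∘ w` is a time change with `u ∘ τ = w`, and the energy
`(u' ∘ τ)² - w'²` is conserved, because both terms have derivative `2 f(w) w'`. Hence
`w' = ± u' ∘ τ`; the sign is `+` since `w'(b) = u'(b) > 0`, or, when `b = 0`, since `w` leaves `0`
upwards. Then `τ' = 1`, so `τ` is the identity and `w = u` just after `b`. Continuous induction
spreads the agreement over `[0, c)`.
-/
open Set Filter Topology Function

section InverseOnIcc

variable {u : ℝ → ℝ} {a b : ℝ}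

theorem StrictMonoOn.continuousOn_invFunOn_Icc (hmono : StrictMonoOn u (Icc a b))
    (hu : ContinuousOn u (Icc a b)) (hab : a ≤ b) :
    ContinuousOn (invFunOn u (Icc a b)) (Icc (u a) (u b)) := by
  have hsurj : SurjOn u (Icc a b) (Icc (u a) (u b)) := intermediate_value_Icc hab hu
  set v := invFunOn u (Icc a b)
  let v' : Icc (u a) (u b) → Icc a b := fun s => ⟨v s, hsurj.mapsTo_invFunOn s.2⟩
  have hv'_mono : Monotone v' := fun s₁ s₂ hs => by
    by_contra! hlt
    have := hmono (v' s₂).2 (v' s₁).2 hlt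
    rw [hsurj.rightInvOn_invFunOn s₁.2, hsurj.rightInvOn_invFunOn s₂.2] at this
    exact (lt_of_le_of_lt hs this).false
  have hv'_surj : Surjective v' := fun t =>
    ⟨⟨u t, hmono.monotoneOn (left_mem_Icc.2 hab) t.2 t.2.1,
      hmono.monotoneOn t.2 (right_mem_Icc.2 hab) t.2.2⟩,
      Subtype.ext (hmono.injOn.leftInvOn_invFunOn t.2)⟩
  rw [continuousOn_iff_continuous_domRestrict]
  exact continuous_subtype_val.comp (hv'_mono.continuous_of_surjective hv'_surj)

theorem StrictMonoOn.hasDerivAt_invFunOn_Icc (hmono : StrictMonoOn u (Icc a b))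
    (hu : ContinuousOn u (Icc a b)) (hab : a ≤ b) {s u' : ℝ} (hs : s ∈ Ioo (u a) (u b))
    (hd : HasDerivAt u u' (invFunOn u (Icc a b) s)) (hne : u' ≠ 0) :
    HasDerivAt (invFunOn u (Icc a b)) u'⁻¹ s := by
  have hsurj : SurjOn u (Icc a b) (Icc (u a) (u b)) := intermediate_value_Icc hab hu
  refine hd.of_local_left_inverse ?_ hne ?_
  · exact (hmono.continuousOn_invFunOn_Icc hu hab).continuousAt (Icc_mem_nhds hs.1 hs.2)
  · filter_upwards [Icc_mem_nhds hs.1 hs.2] with y hy using hsurj.rightInvOn_invFunOn hy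

end InverseOnIcc

theorem constant_of_hasDerivAt_zero_Ioo {F : ℝ → ℝ} {a b : ℝ} (hF : ContinuousOn F (Icc a b))
    (hF' : ∀ t ∈ Ioo a b, HasDerivAt F 0 t) : ∀ t ∈ Icc a b, F t = F a := by
  intro t ht
  have hF'' : ∀ t ∈ interior (Icc a b), HasDerivWithinAt F 0 (interior (Icc a b)) t := by
    rw [interior_Icc]
    exact fun t ht => (hF' t ht).hasDerivWithinAt
  have hab : a ∈ Icc a b := left_mem_Icc.2 (ht.1.trans ht.2)
  exact le_antisymm
    (antitoneOn_of_hasDerivWithinAt_nonpos (convex_Icc a b) hF hF'' (fun _ _ => le_rfl) hab ht ht.1)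
    (monotoneOn_of_hasDerivWithinAt_nonneg (convex_Icc a b) hF hF'' (fun _ _ => le_rfl) hab ht ht.1)

theorem eqOn_of_sq_eq_of_hasDerivAt {w w' ψ : ℝ → ℝ} {b e : ℝ} (hbe : b < e)
    (hw : ContinuousOn w (Icc b e)) (hw' : ∀ t ∈ Ioo b e, HasDerivAt w (w' t) t)
    (hw'c : ContinuousOn w' (Icc b e)) (hψ : ContinuousOn ψ (Icc b e))
    (hψpos : ∀ t ∈ Ioc b e, 0 < ψ t) (hsq : EqOn (w' ^ 2) (ψ ^ 2) (Icc b e))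
    (hb : w' b = ψ b) (hstart : 0 < w' b ∨ w b < w e) : EqOn w' ψ (Ioc b e) := by
  rcases isPreconnected_Ioc.eq_or_eq_neg_of_sq_eq (hw'c.mono Ioc_subset_Icc_self)
    (hψ.mono Ioc_subset_Icc_self) (hsq.mono Ioc_subset_Icc_self) (fun ht => (hψpos _ ht).ne')
    with h | h
  · exact h
  exfalso
  rcases hstart with hpos | hlt
  · have hb' : w' b = -ψ b := h.of_subset_closure hw'c hψ.neg Ioc_subset_Icc_self
      (closure_Ioc hbe.ne).ge (left_mem_Icc.2 hbe.le)
    linarith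
  · have hanti : AntitoneOn w (Icc b e) := by
      refine antitoneOn_of_hasDerivWithinAt_nonpos (convex_Icc b e) hw (f' := w') ?_ ?_ <;>
        rw [interior_Icc]
      · exact fun t ht => (hw' t ht).hasDerivWithinAt
      · intro t ht
        rw [h ⟨ht.1, ht.2.le⟩, Pi.neg_apply, neg_nonpos]
        exact (hψpos t ⟨ht.1, ht.2.le⟩).le
    exact (hanti (left_mem_Icc.2 hbe.le) (right_mem_Icc.2 hbe.le) hbe.le).not_gt hlt

structure IsSolution (f : ℝ → ℝ) (c : ℝ) (u u' : ℝ → ℝ) : Prop where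
  continuousOn : ContinuousOn u (Ico 0 c)
  continuousOn_deriv : ContinuousOn u' (Ico 0 c)
  hasDerivAt : ∀ t ∈ Ioo 0 c, HasDerivAt u (u' t) t
  hasDerivAt_deriv : ∀ t ∈ Ioo 0 c, HasDerivAt u' (f (u t)) t

namespace IsSolution

variable {f : ℝ → ℝ} {c : ℝ} {u u' w w' : ℝ → ℝ}

theorem of_contDiffOn (hu : ContDiffOn ℝ 1 u (Ico 0 c))
    (hu'' : ∀ t ∈ Ioo 0 c, HasDerivAt (deriv u) (f (u t)) t) :
    IsSolution f c u (derivWithin u (Ico 0 c)) := by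
  have hderiv : EqOn (derivWithin u (Ico 0 c)) (deriv u) (Ioo 0 c) := fun t ht =>
    derivWithin_of_mem_nhds (Ico_mem_nhds ht.1 ht.2)
  refine ⟨hu.continuousOn, hu.continuousOn_derivWithin (uniqueDiffOn_Ico 0 c) le_rfl,
    fun t ht => ?_, fun t ht => ?_⟩
  · rw [hderiv ht]
    exact ((hu.differentiableOn one_ne_zero t (Ioo_subset_Ico_self ht)).differentiableAt
      (Ico_mem_nhds ht.1 ht.2)).hasDerivAt
  · exact (hu'' t ht).congr_of_eventuallyEq
      (eventuallyEq_of_mem (Ioo_mem_nhds ht.1 ht.2) hderiv)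

theorem strictMonoOn (hu : IsSolution f c u u') (hpos : ∀ t ∈ Ioo 0 c, 0 < u' t) :
    StrictMonoOn u (Ico 0 c) :=
  strictMonoOn_of_hasDerivWithinAt_pos (convex_Ico 0 c) hu.continuousOn
    (by rw [interior_Ico]; exact fun t ht => (hu.hasDerivAt t ht).hasDerivWithinAt)
    (by rw [interior_Ico]; exact hpos)

theorem hasDerivAt_sq_comp_sub_sq (hu : IsSolution f c u u') (hw : IsSolution f c w w')
    {τ : ℝ → ℝ} {t : ℝ} (ht : t ∈ Ioo 0 c) (hτt : τ t ∈ Ioo 0 c)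
    (hτ : HasDerivAt τ (w' t / u' (τ t)) t) (huτ : u (τ t) = w t) (hne : u' (τ t) ≠ 0) :
    HasDerivAt (fun s => u' (τ s) ^ 2 - w' s ^ 2) 0 t := by
  have h₁ := ((hu.hasDerivAt_deriv _ hτt).comp t hτ).pow 2
  have h₂ := (hw.hasDerivAt_deriv t ht).pow 2
  refine (h₁.sub h₂).congr_deriv ?_
  rw [huτ, comp_apply]
  field_simp
  ring

theorem eqOn_of_timeChange (hu : IsSolution f c u u') (hw : IsSolution f c w w')
    (hpos : ∀ t ∈ Ioo 0 c, 0 < u' t) (hwpos : ∀ t ∈ Ioo 0 c, 0 < w t) (hw0 : w 0 = 0)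
    {b e : ℝ} (hb : 0 ≤ b) (hbe : b < e) (hec : e < c) (hb' : u' b = w' b) {τ : ℝ → ℝ}
    (hτ : ContinuousOn τ (Icc b e)) (hτb : τ b = b) (huτ : ∀ t ∈ Icc b e, u (τ t) = w t)
    (hτmem : MapsTo τ (Ioc b e) (Ioo 0 c))
    (hτ' : ∀ t ∈ Ioo b e, HasDerivAt τ (w' t / u' (τ t)) t) : EqOn u w (Icc b e) := by
  have hJ : Icc b e ⊆ Ico 0 c := Icc_subset_Ico hb hec
  have hIoo : Ioo b e ⊆ Ioo 0 c := Ioo_subset_Ioo hb hec.le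
  have hτJ : MapsTo τ (Icc b e) (Ico 0 c) := fun t ht => by
    rcases ht.1.eq_or_lt with hbt | hlt
    · rw [← hbt, hτb]
      exact hJ (left_mem_Icc.2 hbe.le)
    · exact Ioo_subset_Ico_self (hτmem ⟨hlt, ht.2⟩)
  set ψ := fun t => u' (τ t)
  have hψ : ContinuousOn ψ (Icc b e) := hu.continuousOn_deriv.comp hτ hτJ
  have hψpos : ∀ t ∈ Ioc b e, 0 < ψ t := fun t ht => hpos _ (hτmem ht)
  have hw' : ContinuousOn w' (Icc b e) := hw.continuousOn_deriv.mono hJ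
  have hsq : EqOn (w' ^ 2) (ψ ^ 2) (Icc b e) := fun t ht => by
    have := constant_of_hasDerivAt_zero_Ioo (F := fun s => ψ s ^ 2 - w' s ^ 2)
      ((hψ.pow 2).sub (hw'.pow 2)) (fun s hs => hu.hasDerivAt_sq_comp_sub_sq hw (hIoo hs)
        (hτmem ⟨hs.1, hs.2.le⟩) (hτ' s hs) (huτ s ⟨hs.1.le, hs.2.le⟩)
        (hψpos s ⟨hs.1, hs.2.le⟩).ne') t ht
    simp only [ψ, hτb, hb', sub_self, sub_eq_zero] at this
    simp only [Pi.pow_apply, ψ, this]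
  have hstart : 0 < w' b ∨ w b < w e := by
    rcases hb.eq_or_lt with rfl | hb
    · exact .inr (by rw [hw0]; exact hwpos e ⟨hbe, hec⟩)
    · exact .inl (hb' ▸ hpos b ⟨hb, hbe.trans hec⟩)
  have hw'ψ : EqOn w' ψ (Ioc b e) :=
    eqOn_of_sq_eq_of_hasDerivAt hbe (hw.continuousOn.mono hJ)
      (fun t ht => hw.hasDerivAt t (hIoo ht)) hw' hψ hψpos hsq (by simp only [ψ, hτb, hb'])
      hstart
  have hτid := constant_of_hasDerivAt_zero_Ioo (hτ.sub continuousOn_id) fun t ht =>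
    ((hτ' t ht).sub (hasDerivAt_id t)).congr_deriv (by
      rw [hw'ψ ⟨ht.1, ht.2.le⟩, div_self (hψpos t ⟨ht.1, ht.2.le⟩).ne', sub_self])
  intro t ht
  have : τ t = t := by simpa [hτb, sub_eq_zero] using hτid t ht
  rw [← huτ t ht, this]

theorem exists_timeChange (hu : IsSolution f c u u') (hw : IsSolution f c w w')
    (hpos : ∀ t ∈ Ioo 0 c, 0 < u' t) (hwpos : ∀ t ∈ Ioo 0 c, 0 < w t) (hu0 : u 0 = 0)
    {b : ℝ} (hb : b ∈ Ico 0 c) (hbw : u b = w b) :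
    ∃ e ∈ Ioo b c, ∃ τ : ℝ → ℝ, ContinuousOn τ (Icc b e) ∧ τ b = b ∧
      (∀ t ∈ Icc b e, u (τ t) = w t) ∧ MapsTo τ (Ioc b e) (Ioo 0 c) ∧
      ∀ t ∈ Ioo b e, HasDerivAt τ (w' t / u' (τ t)) t := by
  obtain ⟨d, hbd, hdc⟩ := exists_between hb.2
  have hd : Icc 0 d ⊆ Ico 0 c := Icc_subset_Ico_right hdc
  have hmono : StrictMonoOn u (Icc 0 d) := (hu.strictMonoOn hpos).mono hd
  have hcont : ContinuousOn u (Icc 0 d) := hu.continuousOn.mono hd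
  have hd0 : 0 ≤ d := hb.1.trans hbd.le
  have hbmem : b ∈ Icc 0 d := ⟨hb.1, hbd.le⟩
  have hev : ∀ᶠ t in 𝓝[≥] b, t < d ∧ w t < u d := by
    have hwb : ContinuousWithinAt w (Ici b) b := (hw.continuousOn b hb).mono_of_mem_nhdsWithin
      (mem_of_superset (Ico_mem_nhdsGE hb.2) (Ico_subset_Ico_left hb.1))
    exact Eventually.and (mem_nhdsWithin_of_mem_nhds (Iio_mem_nhds hbd))
      (hwb.eventually_lt_const (hbw ▸ hmono hbmem ⟨hd0, le_rfl⟩ hbd))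
  obtain ⟨e, hbe, he⟩ := mem_nhdsGE_iff_exists_Icc_subset.1 hev
  have hed : e < d := (he (right_mem_Icc.2 hbe.le)).1
  have hwJ : MapsTo w (Icc b e) (Icc (u 0) (u d)) := fun t ht => by
    refine ⟨?_, (he ht).2.le⟩
    rcases ht.1.eq_or_lt with hbt | hbt
    · rw [← hbt, ← hbw]
      exact hmono.monotoneOn ⟨le_rfl, hd0⟩ hbmem hb.1
    · rw [hu0]
      exact (hwpos t ⟨hb.1.trans_lt hbt, (he ht).1.trans hdc⟩).le
  have hwJ' : MapsTo w (Ioc b e) (Ioo (u 0) (u d)) := fun t ht => by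
    rw [hu0]
    exact ⟨hwpos t ⟨hb.1.trans_lt ht.1, ht.2.trans_lt (hed.trans hdc)⟩, (he ⟨ht.1.le, ht.2⟩).2⟩
  have hsurj : SurjOn u (Icc 0 d) (Icc (u 0) (u d)) := intermediate_value_Icc hd0 hcont
  set v := invFunOn u (Icc 0 d)
  have hτmem : MapsTo (v ∘ w) (Ioc b e) (Ioo 0 c) := fun t ht => by
    have hvt := hsurj.mapsTo_invFunOn (hwJ ⟨ht.1.le, ht.2⟩)
    have hwt := hwJ' ht
    rw [← hsurj.rightInvOn_invFunOn (hwJ ⟨ht.1.le, ht.2⟩)] at hwt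
    exact ⟨(hmono.lt_iff_lt ⟨le_rfl, hd0⟩ hvt).1 hwt.1,
      ((hmono.lt_iff_lt hvt ⟨hd0, le_rfl⟩).1 hwt.2).trans hdc⟩
  refine ⟨e, ⟨hbe, hed.trans hdc⟩, v ∘ w,
    (hmono.continuousOn_invFunOn_Icc hcont hd0).comp (hw.continuousOn.mono
      (Icc_subset_Ico hb.1 (hed.trans hdc))) hwJ,
    by simp only [comp_apply, ← hbw]; exact hmono.injOn.leftInvOn_invFunOn hbmem,
    fun t ht => hsurj.rightInvOn_invFunOn (hwJ ht), hτmem, fun t ht => ?_⟩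
  have ht' : t ∈ Ioo 0 c := ⟨hb.1.trans_lt ht.1, ht.2.trans (hed.trans hdc)⟩
  rw [div_eq_inv_mul]
  exact (hmono.hasDerivAt_invFunOn_Icc hcont hd0 (hwJ' ⟨ht.1, ht.2.le⟩)
    (hu.hasDerivAt _ (hτmem ⟨ht.1, ht.2.le⟩)) (hpos _ (hτmem ⟨ht.1, ht.2.le⟩)).ne').comp t
    (hw.hasDerivAt t ht')

theorem eqOn_Ico (hu : IsSolution f c u u') (hw : IsSolution f c w w')
    (hpos : ∀ t ∈ Ioo 0 c, 0 < u' t) (hwpos : ∀ t ∈ Ioo 0 c, 0 < w t) (hu0 : u 0 = 0)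
    (hw0 : w 0 = 0) (h'0 : u' 0 = w' 0) : EqOn u w (Ico 0 c) := by
  intro t₀ ht₀
  set s := {t | u t = w t ∧ u' t = w' t}
  have hs : s ∩ Icc 0 t₀ =
      Icc 0 t₀ ∩ (fun t => ((u t, u' t), (w t, w' t))) ⁻¹' {p | p.1 = p.2} := by
    ext t
    simp only [s, mem_inter_iff, mem_ofPred_eq, mem_preimage, Prod.mk.injEq]
    exact and_comm
  have hclosed : IsClosed (s ∩ Icc 0 t₀) := by
    have hJ : Icc 0 t₀ ⊆ Ico 0 c := Icc_subset_Ico_right ht₀.2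
    rw [hs]
    exact ContinuousOn.preimage_isClosed_of_isClosed
      (((hu.continuousOn.mono hJ).prodMk (hu.continuousOn_deriv.mono hJ)).prodMk
        ((hw.continuousOn.mono hJ).prodMk (hw.continuousOn_deriv.mono hJ)))
      isClosed_Icc isClosed_diagonal
  refine (hclosed.Icc_subset_of_forall_mem_nhdsWithin ⟨hu0.trans hw0.symm, h'0⟩ ?_
    ⟨ht₀.1, le_rfl⟩).1
  rintro b ⟨⟨hbw, hbw'⟩, hb⟩
  have hb : b ∈ Ico 0 c := ⟨hb.1, hb.2.trans ht₀.2⟩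
  obtain ⟨e, he, τ, hτ, hτb, huτ, hτmem, hτ'⟩ := hu.exists_timeChange hw hpos hwpos hu0 hb hbw
  have heq := hu.eqOn_of_timeChange hw hpos hwpos hw0 hb.1 he.1 he.2 hbw' hτ hτb huτ hτmem hτ'
  refine mem_of_superset (Ioo_mem_nhdsGT he.1) fun t ht => ⟨heq (Ioo_subset_Icc_self ht), ?_⟩
  have ht' : t ∈ Ioo 0 c := ⟨hb.1.trans_lt ht.1, ht.2.trans he.2⟩
  exact (hu.hasDerivAt t ht').unique ((hw.hasDerivAt t ht').congr_of_eventuallyEq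
    (eventuallyEq_of_mem (Ioo_mem_nhds ht.1 ht.2) (heq.mono Ioo_subset_Icc_self)))

end IsSolution

theorem stmt_2_general (c : ℝ) (f : ℝ → ℝ)
    (u w : ℝ → ℝ)
    (hu1 : ContDiffOn ℝ 1 u (Set.Ico 0 c)) (hw1 : ContDiffOn ℝ 1 w (Set.Ico 0 c))
    (hwpos : ∀ t ∈ Set.Ioo 0 c, 0 < w t)
    (hueq : ∀ t ∈ Set.Ioo 0 c, HasDerivAt (deriv u) (f (u t)) t)
    (hweq : ∀ t ∈ Set.Ioo 0 c, HasDerivAt (deriv w) (f (w t)) t)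
    (hu0 : u 0 = 0) (hw0 : w 0 = 0)
    (h'0 : derivWithin u (Set.Ico 0 c) 0 = derivWithin w (Set.Ico 0 c) 0)
    (hu' : ∀ t ∈ Set.Ioo 0 c, 0 < deriv u t) :
    ∀ t ∈ Set.Ico 0 c, u t = w t := by
  have hpos : ∀ t ∈ Ioo 0 c, 0 < derivWithin u (Ico 0 c) t := fun t ht => by
    rw [derivWithin_of_mem_nhds (Ico_mem_nhds ht.1 ht.2)]
    exact hu' t ht
  exact (IsSolution.of_contDiffOn hu1 hueq).eqOn_Ico (IsSolution.of_contDiffOn hw1 hweq) hpos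
    hwpos hu0 hw0 h'0

/-- Lemma 2.2 of Li–Nirenberg. -/
theorem stmt_2 (c : ℝ) (hc : 0 < c) (f : ℝ → ℝ)
    (hf : ∀ s : Set ℝ, s ⊆ Set.Ioi 0 → IsCompact s → ∃ M : ℝ, ∀ x ∈ s, |f x| ≤ M)
    (u w : ℝ → ℝ)
    (hu1 : ContDiffOn ℝ 1 u (Set.Ico 0 c)) (hw1 : ContDiffOn ℝ 1 w (Set.Ico 0 c))
    (hupos : ∀ t ∈ Set.Ioo 0 c, 0 < u t) (hwpos : ∀ t ∈ Set.Ioo 0 c, 0 < w t)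
    (hueq : ∀ t ∈ Set.Ioo 0 c, HasDerivAt (deriv u) (f (u t)) t)
    (hweq : ∀ t ∈ Set.Ioo 0 c, HasDerivAt (deriv w) (f (w t)) t)
    (hu0 : u 0 = 0) (hw0 : w 0 = 0)
    (h'0 : derivWithin u (Set.Ico 0 c) 0 = derivWithin w (Set.Ico 0 c) 0)
    (hu' : ∀ t ∈ Set.Ioo 0 c, 0 < deriv u t) :
    ∀ t ∈ Set.Ico 0 c, u t = w t :=
  stmt_2_general c f u w hu1 hw1 hwpos hueq hweq hu0 hw0 h'0 hu'
end

section
/- Let c > 0, let f : (0,∞) → ℝ be locally Lipschitz on (0,∞) (not necessarily up to 0), and let u, w be real functions on [0,c) that are continuously differentiable on [0,c), positive on (0,c), twice differentiable on (0,c), and satisfy u''(t) = f(u(t)) and w''(t) = f(w(t)) for all t ∈ (0,c). Assume u(0) = w(0) = 0 and u'(0) = w'(0). Then u(t) = w(t) for all t ∈ [0,c). -/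
/-!
Away from `0` both functions stay in a compact part of `(0, ∞)`, where `f` is Lipschitz, so
uniqueness for the initial value problem applies there; the difficulty is the singular start at
`0`. With `F' = f` the energy `u'² - 2 F(u)` is conserved, and letting `t → 0⁺` shows that its
value is fixed by `u'(0)`, so `u'² = G(u)` and `w'² = G(w)` for one and the same `G`. Near `0` the
function `G` has no zero on the range of `u` (a zero would be an equilibrium of the equation), so
`u' = √G(u)` and `w' = √G(w)` there. Separating variables with `Φ' = 1 / √G` gives
`Φ(u(t)) - t = lim_{0⁺} Φ = Φ(w(t)) - t`, hence `u = w` near `0`, and then everywhere.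
-/

open Set Filter Topology intervalIntegral

theorem hasDerivAt_integral_of_continuousOn {E : Type*} [NormedAddCommGroup E] [NormedSpace ℝ E]
    [CompleteSpace E] {f : ℝ → E} {I : Set ℝ} (hI : IsOpen I) (hI' : I.OrdConnected)
    (hf : ContinuousOn f I) {a s : ℝ} (ha : a ∈ I) (hs : s ∈ I) :
    HasDerivAt (fun x => ∫ y in a..x, f y) (f s) s :=
  integral_hasDerivAt_right (hf.mono (hI'.uIcc_subset ha hs)).intervalIntegrable
    (hf.stronglyMeasurableAtFilter hI s hs) (hf.continuousAt (hI.mem_nhds hs))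

theorem continuousOn_Ioi_of_lipschitzOnWith_isCompact {f : ℝ → ℝ}
    (hf : ∀ s ⊆ Ioi (0 : ℝ), IsCompact s → ∃ L, LipschitzOnWith L f s) :
    ContinuousOn f (Ioi 0) := by
  intro x (hx : 0 < x)
  obtain ⟨L, hL⟩ := hf (Icc (x / 2) (2 * x)) (fun y hy => (half_pos hx).trans_le hy.1)
    isCompact_Icc
  exact (hL.continuousOn.continuousAt (Icc_mem_nhds (by linarith) (by linarith))).continuousWithinAt

theorem Ioo_subset_image_Ioo_of_continuousOn {v : ℝ → ℝ} {δ t : ℝ}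
    (hv : ContinuousOn v (Ico 0 δ)) (hv0 : v 0 = 0) (ht : t ∈ Ioo 0 δ) :
    Ioo 0 (v t) ⊆ v '' Ioo 0 t := by
  simpa only [hv0] using intermediate_value_Ioo ht.1.le (hv.mono (Icc_subset_Ico_right ht.2))

/-- Since `v` takes every small positive value at small positive times, a limit along `v`
at `0⁺` is a limit at `0⁺`. -/
theorem tendsto_nhdsGT_of_tendsto_comp {α : Type*} {v : ℝ → ℝ} {g : ℝ → α} {δ : ℝ}
    {l : Filter α} (hδ : 0 < δ) (hv : ContinuousOn v (Ico 0 δ)) (hv0 : v 0 = 0)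
    (hvpos : ∀ t ∈ Ioo 0 δ, 0 < v t) (h : Tendsto (g ∘ v) (𝓝[>] 0) l) :
    Tendsto g (𝓝[>] 0) l := by
  intro U hU
  obtain ⟨ε, hε : 0 < ε, hεU⟩ := mem_nhdsGT_iff_exists_Ioo_subset.1 (h hU)
  have ht : min ε δ / 2 ∈ Ioo 0 δ :=
    ⟨half_pos (lt_min hε hδ), (half_lt_self (lt_min hε hδ)).trans_le (min_le_right _ _)⟩
  refine mem_map.2 <| mem_of_superset (Ioo_mem_nhdsGT (hvpos _ ht)) fun s hs => ?_
  obtain ⟨t, ht', rfl⟩ := Ioo_subset_image_Ioo_of_continuousOn hv hv0 ht hs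
  exact hεU ⟨ht'.1, ht'.2.trans ((half_lt_self (lt_min hε hδ)).trans_le (min_le_left _ _))⟩

theorem ContDiffOn.tendsto_deriv_nhdsGT {u : ℝ → ℝ} {a c : ℝ} (hac : a < c)
    (hu : ContDiffOn ℝ 1 u (Ico a c)) :
    Tendsto (deriv u) (𝓝[>] a) (𝓝 (derivWithin u (Ico a c) a)) := by
  have h := (hu.continuousOn_derivWithin (uniqueDiffOn_Ico a c) le_rfl a ⟨le_rfl, hac⟩).mono
    Ioo_subset_Ico_self
  rw [ContinuousWithinAt, nhdsWithin_Ioo_eq_nhdsGT hac] at h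
  refine h.congr' ?_
  filter_upwards [Ioo_mem_nhdsGT hac] with t ht
  exact derivWithin_of_mem_nhds (mem_of_superset (Ioo_mem_nhds ht.1 ht.2) Ioo_subset_Ico_self)

theorem ContinuousOn.tendsto_nhdsGT_of_Ico {u : ℝ → ℝ} {a c : ℝ} (hu : ContinuousOn u (Ico a c))
    (hac : a < c) : Tendsto u (𝓝[>] a) (𝓝 (u a)) := by
  have := (hu a ⟨le_rfl, hac⟩).mono Ioo_subset_Ico_self
  rwa [ContinuousWithinAt, nhdsWithin_Ioo_eq_nhdsGT hac] at this

def IsPosSolOn (f u : ℝ → ℝ) (I : Set ℝ) : Prop :=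
  ∀ t ∈ I, 0 < u t ∧ HasDerivAt u (deriv u t) t ∧ HasDerivAt (deriv u) (f (u t)) t

theorem IsPosSolOn.eqOn {f u w : ℝ → ℝ} {a b t₀ : ℝ}
    (hf : ∀ s ⊆ Ioi (0 : ℝ), IsCompact s → ∃ L, LipschitzOnWith L f s)
    (hu : IsPosSolOn f u (Ioo a b)) (hw : IsPosSolOn f w (Ioo a b)) (ht₀ : t₀ ∈ Ioo a b)
    (h : u t₀ = w t₀) (h' : deriv u t₀ = deriv w t₀) : EqOn u w (Ioo a b) := by
  intro t ht
  obtain ⟨a', ha', ha't⟩ := exists_between (lt_min ht.1 ht₀.1)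
  obtain ⟨b', hb't, hb'⟩ := exists_between (max_lt ht.2 ht₀.2)
  have hsub : Icc a' b' ⊆ Ioo a b := Icc_subset_Ioo ha' hb'
  have hcont {v : ℝ → ℝ} (hv : IsPosSolOn f v (Ioo a b)) : ContinuousOn v (Icc a' b') :=
    fun x hx => (hv x (hsub hx)).2.1.continuousAt.continuousWithinAt
  set K := u '' Icc a' b' ∪ w '' Icc a' b'
  obtain ⟨L, hL⟩ := hf K
    (by rintro _ (⟨x, hx, rfl⟩ | ⟨x, hx, rfl⟩)
        exacts [(hu x (hsub hx)).1, (hw x (hsub hx)).1])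
    ((isCompact_Icc.image_of_continuousOn (hcont hu)).union
      (isCompact_Icc.image_of_continuousOn (hcont hw)))
  -- `u'' = f(u)` as the first-order system `(u, u')' = (u', f u)`
  have hLip : LipschitzOnWith (max 1 (L * 1)) (fun p : ℝ × ℝ => (p.2, f p.1)) (K ×ˢ univ) :=
    LipschitzWith.prod_snd.lipschitzOnWith.prodMk
      (hL.comp LipschitzWith.prod_fst.lipschitzOnWith fun p hp => hp.1)
  have hsol {v : ℝ → ℝ} (hv : IsPosSolOn f v (Ioo a b)) (hvK : ∀ x ∈ Icc a' b', v x ∈ K) :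
      ∀ x ∈ Ioo a' b', HasDerivAt (fun x => (v x, deriv v x)) (deriv v x, f (v x)) x ∧
        (v x, deriv v x) ∈ K ×ˢ univ := fun x hx =>
    ⟨(hv x (hsub (Ioo_subset_Icc_self hx))).2.1.prodMk (hv x (hsub (Ioo_subset_Icc_self hx))).2.2,
      hvK x (Ioo_subset_Icc_self hx), trivial⟩
  have hsys := ODE_solution_unique_of_mem_Ioo (fun _ _ => hLip)
    ⟨(min_le_right _ _).trans_lt' ha't, (le_max_right _ _).trans_lt hb't⟩
    (hsol hu fun x hx => Or.inl ⟨x, hx, rfl⟩) (hsol hw fun x hx => Or.inr ⟨x, hx, rfl⟩)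
    (Prod.ext h h')
  exact congrArg Prod.fst (hsys ⟨(min_le_left _ _).trans_lt' ha't, (le_max_left _ _).trans_lt hb't⟩)

theorem IsPosSolOn.exists_sq_deriv_eq {f F u : ℝ → ℝ} {a b : ℝ}
    (hF : ∀ s > 0, HasDerivAt F (f s) s) (hu : IsPosSolOn f u (Ioo a b)) :
    ∃ E, ∀ t ∈ Ioo a b, deriv u t ^ 2 = E + 2 * F (u t) := by
  have hE (t : ℝ) (ht : t ∈ Ioo a b) :
      HasDerivAt (fun t => deriv u t ^ 2 - 2 * F (u t)) 0 t := by
    obtain ⟨hpos, hu', hu''⟩ := hu t ht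
    refine ((hu''.fun_pow 2).sub (((hF _ hpos).comp t hu').const_mul 2)).congr_deriv ?_
    push_cast
    ring
  obtain ⟨E, hE⟩ := isOpen_Ioo.exists_is_const_of_deriv_eq_zero isPreconnected_Ioo
    (fun t ht => (hE t ht).differentiableAt.differentiableWithinAt) fun t ht => (hE t ht).deriv
  exact ⟨E, fun t ht => by linarith [hE t ht]⟩

/-- The energy level of a solution starting at `0` is read off from `u'(0)`. -/
theorem tendsto_nhdsGT_of_sq_deriv_eq {F u : ℝ → ℝ} {c E : ℝ} (hc : 0 < c)
    (hu : ContDiffOn ℝ 1 u (Ico 0 c)) (hu0 : u 0 = 0) (hupos : ∀ t ∈ Ioo 0 c, 0 < u t)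
    (hE : ∀ t ∈ Ioo 0 c, deriv u t ^ 2 = E + 2 * F (u t)) :
    Tendsto F (𝓝[>] 0) (𝓝 ((derivWithin u (Ico 0 c) 0 ^ 2 - E) / 2)) := by
  refine tendsto_nhdsGT_of_tendsto_comp hc hu.continuousOn hu0 hupos ?_
  refine ((((hu.tendsto_deriv_nhdsGT hc).pow 2).sub_const E).div_const 2).congr' ?_
  filter_upwards [Ioo_mem_nhdsGT hc] with t ht
  simp only [Function.comp_apply, hE t ht]
  ring

theorem exists_sq_deriv_eq_of_derivWithin_eq {f u w : ℝ → ℝ} {c : ℝ} (hc : 0 < c)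
    (hf : ContinuousOn f (Ioi 0))
    (hu1 : ContDiffOn ℝ 1 u (Ico 0 c)) (hw1 : ContDiffOn ℝ 1 w (Ico 0 c))
    (hu : IsPosSolOn f u (Ioo 0 c)) (hw : IsPosSolOn f w (Ioo 0 c))
    (hu0 : u 0 = 0) (hw0 : w 0 = 0)
    (h'0 : derivWithin u (Ico 0 c) 0 = derivWithin w (Ico 0 c) 0) :
    ∃ G : ℝ → ℝ, (∀ s > 0, HasDerivAt G (2 * f s) s) ∧
      (∀ t ∈ Ioo 0 c, deriv u t ^ 2 = G (u t)) ∧ ∀ t ∈ Ioo 0 c, deriv w t ^ 2 = G (w t) := by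
  obtain ⟨F, hF⟩ : ∃ F : ℝ → ℝ, ∀ s > 0, HasDerivAt F (f s) s :=
    ⟨_, fun s hs => hasDerivAt_integral_of_continuousOn isOpen_Ioi ordConnected_Ioi hf
      (mem_Ioi.2 one_pos) hs⟩
  obtain ⟨E, hEu⟩ := hu.exists_sq_deriv_eq hF
  obtain ⟨E', hEw⟩ := hw.exists_sq_deriv_eq hF
  have hEE' : E = E' := by
    have := tendsto_nhds_unique
      (tendsto_nhdsGT_of_sq_deriv_eq hc hu1 hu0 (fun t ht => (hu t ht).1) hEu)
      (tendsto_nhdsGT_of_sq_deriv_eq hc hw1 hw0 (fun t ht => (hw t ht).1) hEw)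
    rw [h'0] at this
    linarith
  subst hEE'
  exact ⟨fun s => E + 2 * F s, fun s hs => ((hF s hs).const_mul 2).const_add E, hEu, hEw⟩

theorem IsPosSolOn.const {f : ℝ → ℝ} {s₀ : ℝ} {I : Set ℝ} (hs₀ : 0 < s₀) (hf : f s₀ = 0) :
    IsPosSolOn f (fun _ => s₀) I := fun t _ => by
  simpa only [deriv_const', hf] using ⟨hs₀, hasDerivAt_const t s₀, hasDerivAt_const t (0 : ℝ)⟩

/-- A zero `s₀` of `G` on the range of `u` would be a minimum of `G ≥ 0`, hence an equilibrium
`f s₀ = 0`, and by uniqueness `u` would stay at `s₀`, contradicting `u 0 = 0`. -/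
theorem pos_of_sq_deriv_eq {f G u : ℝ → ℝ} {c t₁ : ℝ}
    (hf : ∀ s ⊆ Ioi (0 : ℝ), IsCompact s → ∃ L, LipschitzOnWith L f s)
    (hG : ∀ s > 0, HasDerivAt G (2 * f s) s) (huc : ContinuousOn u (Ico 0 c)) (hu0 : u 0 = 0)
    (hu : IsPosSolOn f u (Ioo 0 c)) (hGu : ∀ t ∈ Ioo 0 c, deriv u t ^ 2 = G (u t))
    (ht₁ : t₁ ∈ Ioo 0 c) : ∀ s ∈ Ioo 0 (u t₁), 0 < G s := by
  have hrange : Ioo 0 (u t₁) ⊆ u '' Ioo 0 c :=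
    (Ioo_subset_image_Ioo_of_continuousOn huc hu0 ht₁).trans
      (image_mono (Ioo_subset_Ioo_right ht₁.2.le))
  have hGnonneg : ∀ s ∈ Ioo 0 (u t₁), 0 ≤ G s := by
    intro s hs
    obtain ⟨t, ht, rfl⟩ := hrange hs
    exact hGu t ht ▸ sq_nonneg _
  intro s₀ hs₀
  refine (hGnonneg s₀ hs₀).lt_of_ne fun hG0 => ?_
  have hmin : IsLocalMin G s₀ :=
    mem_of_superset (Ioo_mem_nhds hs₀.1 hs₀.2) fun s hs => hG0 ▸ hGnonneg s hs
  have hf0 : f s₀ = 0 := by linarith [hmin.hasDerivAt_eq_zero (hG s₀ hs₀.1)]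
  obtain ⟨t₀, ht₀, hut₀⟩ := hrange hs₀
  have hconst : EqOn u (fun _ => s₀) (Ioo 0 c) :=
    hu.eqOn hf (IsPosSolOn.const hs₀.1 hf0) ht₀ hut₀ (by
      simpa only [deriv_const', hut₀, ← hG0, sq_eq_zero_iff] using hGu t₀ ht₀)
  have hc : 0 < c := ht₁.1.trans ht₁.2
  have hlim : Tendsto u (𝓝[>] 0) (𝓝 s₀) :=
    tendsto_const_nhds.congr' (eventuallyEq_of_mem (Ioo_mem_nhdsGT hc) hconst).symm
  exact hs₀.1.ne (hu0 ▸ tendsto_nhds_unique (huc.tendsto_nhdsGT_of_Ico hc) hlim)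

theorem deriv_pos_of_ne_zero {v v' : ℝ → ℝ} {δ : ℝ} (hv : ContinuousOn v (Ico 0 δ))
    (hv0 : v 0 = 0) (hvpos : ∀ t ∈ Ioo 0 δ, 0 < v t) (hv' : ∀ t ∈ Ioo 0 δ, HasDerivAt v (v' t) t)
    (hne : ∀ t ∈ Ioo 0 δ, v' t ≠ 0) : ∀ t ∈ Ioo 0 δ, 0 < v' t := by
  intro t ht
  have hsub : Ioo 0 t ⊆ Ioo 0 δ := Ioo_subset_Ioo_right ht.2.le
  obtain ⟨ξ, hξ, hslope⟩ := exists_hasDerivAt_eq_slope v v' ht.1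
    (hv.mono (Icc_subset_Ico_right ht.2)) fun x hx => hv' x (hsub hx)
  have hξpos : 0 < v' ξ := by
    rw [hslope, hv0, sub_zero, sub_zero]
    exact div_pos (hvpos t ht) ht.1
  refine ((hasDerivWithinAt_forall_lt_or_forall_gt_of_forall_ne (convex_Ioo 0 δ)
    (fun t ht => (hv' t ht).hasDerivWithinAt) hne).resolve_left fun hneg => ?_) t ht
  exact (hneg ξ (hsub hξ)).not_gt hξpos

/-- If `v' = h ∘ v` and `Φ' = 1 / h`, then `Φ ∘ v` is a translate of the identity, so the
translation constant is the limit of `Φ` at `0⁺`. -/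
theorem tendsto_nhdsGT_of_hasDerivAt_comp {Φ h v : ℝ → ℝ} {ε δ t : ℝ}
    (hΦ : ∀ s ∈ Ioo 0 ε, HasDerivAt Φ (h s)⁻¹ s) (hh : ∀ s ∈ Ioo 0 ε, h s ≠ 0)
    (hv : ContinuousOn v (Ico 0 δ)) (hv0 : v 0 = 0) (hvmem : ∀ t ∈ Ioo 0 δ, v t ∈ Ioo 0 ε)
    (hv' : ∀ t ∈ Ioo 0 δ, HasDerivAt v (h (v t)) t) (ht : t ∈ Ioo 0 δ) :
    Tendsto Φ (𝓝[>] 0) (𝓝 (Φ (v t) - t)) := by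
  have hd (x : ℝ) (hx : x ∈ Ioo 0 δ) : HasDerivAt (fun x => Φ (v x) - x) 0 x := by
    refine (((hΦ _ (hvmem x hx)).comp x (hv' x hx)).sub (hasDerivAt_id x)).congr_deriv ?_
    rw [inv_mul_cancel₀ (hh _ (hvmem x hx)), sub_self]
  obtain ⟨C, hC⟩ := isOpen_Ioo.exists_is_const_of_deriv_eq_zero isPreconnected_Ioo
    (fun x hx => (hd x hx).differentiableAt.differentiableWithinAt) fun x hx => (hd x hx).deriv
  have hδ : 0 < δ := ht.1.trans ht.2
  rw [hC t ht]
  refine tendsto_nhdsGT_of_tendsto_comp hδ hv hv0 (fun x hx => (hvmem x hx).1) ?_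
  have hid : Tendsto (fun x : ℝ => x + C) (𝓝[>] 0) (𝓝 C) := by
    simpa using ((continuous_add_const C).tendsto 0).mono_left nhdsWithin_le_nhds
  refine hid.congr' ?_
  filter_upwards [Ioo_mem_nhdsGT hδ] with x hx
  rw [Function.comp_apply, ← hC x hx, add_sub_cancel]

/-- No Lipschitz bound on `h` is needed: since `h > 0`, one can separate variables,
`dv / h(v) = dt`. -/
theorem eqOn_of_hasDerivAt_comp {h v w : ℝ → ℝ} {ε δ : ℝ} (hh : ContinuousOn h (Ioo 0 ε))
    (hhpos : ∀ s ∈ Ioo 0 ε, 0 < h s)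
    (hv : ContinuousOn v (Ico 0 δ)) (hv0 : v 0 = 0) (hvmem : ∀ t ∈ Ioo 0 δ, v t ∈ Ioo 0 ε)
    (hv' : ∀ t ∈ Ioo 0 δ, HasDerivAt v (h (v t)) t)
    (hw : ContinuousOn w (Ico 0 δ)) (hw0 : w 0 = 0) (hwmem : ∀ t ∈ Ioo 0 δ, w t ∈ Ioo 0 ε)
    (hw' : ∀ t ∈ Ioo 0 δ, HasDerivAt w (h (w t)) t) :
    EqOn v w (Ioo 0 δ) := by
  intro t ht
  have hε : 0 < ε := (hvmem t ht).1.trans (hvmem t ht).2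
  have hne (s : ℝ) (hs : s ∈ Ioo 0 ε) : h s ≠ 0 := (hhpos s hs).ne'
  set Φ := fun s => ∫ σ in ε / 2..s, (h σ)⁻¹
  have hΦ (s : ℝ) (hs : s ∈ Ioo 0 ε) : HasDerivAt Φ (h s)⁻¹ s :=
    hasDerivAt_integral_of_continuousOn isOpen_Ioo ordConnected_Ioo (hh.inv₀ hne)
      ⟨half_pos hε, half_lt_self hε⟩ hs
  have hΦmono : StrictMonoOn Φ (Ioo 0 ε) := by
    refine strictMonoOn_of_deriv_pos (convex_Ioo 0 ε)
      (fun s hs => (hΦ s hs).continuousAt.continuousWithinAt) fun s hs => ?_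
    rw [interior_Ioo] at hs
    exact (hΦ s hs).deriv ▸ inv_pos.2 (hhpos s hs)
  refine hΦmono.injOn (hvmem t ht) (hwmem t ht) ?_
  have := tendsto_nhds_unique (tendsto_nhdsGT_of_hasDerivAt_comp hΦ hne hv hv0 hvmem hv' ht)
    (tendsto_nhdsGT_of_hasDerivAt_comp hΦ hne hw hw0 hwmem hw' ht)
  linarith

theorem hasDerivAt_sqrt_of_sq_deriv_eq {f G v : ℝ → ℝ} {c δ ε : ℝ} (hδc : δ ≤ c)
    (hvc : ContinuousOn v (Ico 0 c)) (hv0 : v 0 = 0) (hv : IsPosSolOn f v (Ioo 0 c))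
    (hGv : ∀ t ∈ Ioo 0 c, deriv v t ^ 2 = G (v t)) (hGpos : ∀ s ∈ Ioo 0 ε, 0 < G s)
    (hvε : ∀ t ∈ Ioo 0 δ, v t < ε) : ∀ t ∈ Ioo 0 δ, HasDerivAt v √(G (v t)) t := by
  have hsub : Ioo 0 δ ⊆ Ioo 0 c := Ioo_subset_Ioo_right hδc
  have hpos := deriv_pos_of_ne_zero (hvc.mono (Ico_subset_Ico_right hδc)) hv0
    (fun t ht => (hv t (hsub ht)).1) (fun t ht => (hv t (hsub ht)).2.1) fun t ht h0 => by
      have := hGpos _ ⟨(hv t (hsub ht)).1, hvε t ht⟩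
      rw [← hGv t (hsub ht), h0, sq, zero_mul] at this
      exact this.false
  intro t ht
  rw [← hGv t (hsub ht), Real.sqrt_sq (hpos t ht).le]
  exact (hv t (hsub ht)).2.1

theorem exists_eqOn_Ioo_of_sq_deriv_eq {f G u w : ℝ → ℝ} {c : ℝ} (hc : 0 < c)
    (hf : ∀ s ⊆ Ioi (0 : ℝ), IsCompact s → ∃ L, LipschitzOnWith L f s)
    (hG : ∀ s > 0, HasDerivAt G (2 * f s) s)
    (huc : ContinuousOn u (Ico 0 c)) (hwc : ContinuousOn w (Ico 0 c)) (hu0 : u 0 = 0)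
    (hw0 : w 0 = 0) (hu : IsPosSolOn f u (Ioo 0 c)) (hw : IsPosSolOn f w (Ioo 0 c))
    (hGu : ∀ t ∈ Ioo 0 c, deriv u t ^ 2 = G (u t)) (hGw : ∀ t ∈ Ioo 0 c, deriv w t ^ 2 = G (w t)) :
    ∃ δ ∈ Ioo 0 c, EqOn u w (Ioo 0 δ) := by
  have hmid : c / 2 ∈ Ioo 0 c := ⟨half_pos hc, half_lt_self hc⟩
  set ε := u (c / 2)
  have hGpos := pos_of_sq_deriv_eq hf hG huc hu0 hu hGu hmid
  have hε : 0 < ε := (hu _ hmid).1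
  have hsmall : ∀ᶠ t in 𝓝[>] 0, u t < ε ∧ w t < ε :=
    ((huc.tendsto_nhdsGT_of_Ico hc).eventually (hu0 ▸ eventually_lt_nhds hε)).and
      ((hwc.tendsto_nhdsGT_of_Ico hc).eventually (hw0 ▸ eventually_lt_nhds hε))
  obtain ⟨δ₀, hδ₀ : 0 < δ₀, hδ₀small⟩ := mem_nhdsGT_iff_exists_Ioo_subset.1 hsmall
  set δ := min δ₀ (c / 2)
  have hδ : δ ∈ Ioo 0 c := ⟨lt_min hδ₀ hmid.1, (min_le_right _ _).trans_lt hmid.2⟩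
  have hsub : Ioo 0 δ ⊆ Ioo 0 c := Ioo_subset_Ioo_right hδ.2.le
  have hsmall' (t : ℝ) (ht : t ∈ Ioo 0 δ) : u t < ε ∧ w t < ε :=
    hδ₀small ⟨ht.1, ht.2.trans_le (min_le_left _ _)⟩
  refine ⟨δ, hδ, eqOn_of_hasDerivAt_comp (h := fun s => √(G s)) (ε := ε)
    (fun s hs => (hG s hs.1).continuousAt.sqrt.continuousWithinAt)
    (fun s hs => Real.sqrt_pos.2 (hGpos s hs)) (huc.mono (Ico_subset_Ico_right hδ.2.le)) hu0
    (fun t ht => ⟨(hu t (hsub ht)).1, (hsmall' t ht).1⟩)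
    (hasDerivAt_sqrt_of_sq_deriv_eq hδ.2.le huc hu0 hu hGu hGpos fun t ht => (hsmall' t ht).1)
    (hwc.mono (Ico_subset_Ico_right hδ.2.le)) hw0
    (fun t ht => ⟨(hw t (hsub ht)).1, (hsmall' t ht).2⟩)
    (hasDerivAt_sqrt_of_sq_deriv_eq hδ.2.le hwc hw0 hw hGw hGpos fun t ht => (hsmall' t ht).2)⟩

/-- Lemma 2.3 of Li–Nirenberg. -/
theorem stmt_3 (c : ℝ) (hc : 0 < c) (f : ℝ → ℝ)
    (hf : ∀ s : Set ℝ, s ⊆ Set.Ioi 0 → IsCompact s → ∃ L : NNReal, LipschitzOnWith L f s)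
    (u w : ℝ → ℝ)
    (hu1 : ContDiffOn ℝ 1 u (Set.Ico 0 c)) (hw1 : ContDiffOn ℝ 1 w (Set.Ico 0 c))
    (hupos : ∀ t ∈ Set.Ioo 0 c, 0 < u t) (hwpos : ∀ t ∈ Set.Ioo 0 c, 0 < w t)
    (hueq : ∀ t ∈ Set.Ioo 0 c, HasDerivAt (deriv u) (f (u t)) t)
    (hweq : ∀ t ∈ Set.Ioo 0 c, HasDerivAt (deriv w) (f (w t)) t)
    (hu0 : u 0 = 0) (hw0 : w 0 = 0)
    (h'0 : derivWithin u (Set.Ico 0 c) 0 = derivWithin w (Set.Ico 0 c) 0) :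
    ∀ t ∈ Set.Ico 0 c, u t = w t := by
  have hsol {v : ℝ → ℝ} (hv1 : ContDiffOn ℝ 1 v (Ico 0 c)) (hvpos : ∀ t ∈ Ioo 0 c, 0 < v t)
      (hveq : ∀ t ∈ Ioo 0 c, HasDerivAt (deriv v) (f (v t)) t) : IsPosSolOn f v (Ioo 0 c) :=
    fun t ht => ⟨hvpos t ht,
      ((hv1.differentiableOn one_ne_zero t (Ioo_subset_Ico_self ht)).differentiableAt
        (mem_of_superset (Ioo_mem_nhds ht.1 ht.2) Ioo_subset_Ico_self)).hasDerivAt, hveq t ht⟩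
  have hu := hsol hu1 hupos hueq
  have hw := hsol hw1 hwpos hweq
  obtain ⟨G, hG, hGu, hGw⟩ := exists_sq_deriv_eq_of_derivWithin_eq hc
    (continuousOn_Ioi_of_lipschitzOnWith_isCompact hf) hu1 hw1 hu hw hu0 hw0 h'0
  obtain ⟨δ, hδ, hnear⟩ := exists_eqOn_Ioo_of_sq_deriv_eq hc hf hG hu1.continuousOn
    hw1.continuousOn hu0 hw0 hu hw hGu hGw
  have hmid : δ / 2 ∈ Ioo 0 δ := ⟨half_pos hδ.1, half_lt_self hδ.1⟩
  have hderiv : deriv u (δ / 2) = deriv w (δ / 2) :=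
    (eventuallyEq_of_mem (Ioo_mem_nhds hmid.1 hmid.2) hnear).deriv_eq
  have hfar := hu.eqOn hf hw ⟨hmid.1, hmid.2.trans hδ.2⟩ (hnear hmid) hderiv
  rintro t ⟨ht0, htc⟩
  rcases ht0.eq_or_lt with rfl | ht0
  · rw [hu0, hw0]
  · exact hfar ⟨ht0, htc⟩
end

section
/- Let b > 0 and let u, v be real functions that are C² on (0,b) and C¹ on [0,b], satisfying u(t) ≥ v(t) > 0 for all t ∈ (0,b]. Assume that either (u'(t) > 0 and v'(t) ≥ 0 for all t ∈ (0,b]) or (u'(t) ≥ 0 and v'(t) > 0 for all t ∈ (0,b]), and that u(0) = u'(0) = 0. Assume the curvature hypothesis: whenever u(t) = v(s) with 0 < t < s < b, one has u''(t)/(1+u'(t)²)^{3/2} ≤ v''(s)/(1+v'(s)²)^{3/2}. Then u(t) = v(t) for all t ∈ [0,b]. -/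
/-!
Suppose `u x ≠ v x` and let `t₀ < x` be the last point of `[0, x]` where the graphs touch; there
the slopes agree (or `u' t₀ = 0` when `t₀ = 0`). Inverting whichever of `u`, `v` is strictly
increasing pairs each point of `(t₀, x]` with a point of the other graph at the same height, giving
pairs `t < s` with `u t = v s`. Along this pairing `(1 + u'(t)²)^(-1/2) - (1 + v'(s)²)^(-1/2)`
has derivative (rate of change of the height) × `(κ_v(s) - κ_u(t)) ≥ 0`, so it stays nonnegative,
i.e. `u'(t) ≤ v'(s)`. Hence `s - t` is nonincreasing along the pairing; but it vanishes at `t₀`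
and is positive at `x`. When `v` is the increasing function, the pairing needs `u < v b`, which
holds up to the first point where `u` would reach `v b`, and that point cannot exist.
-/

open Set Filter Topology Function

noncomputable def graphCurvature (u : ℝ → ℝ) (t : ℝ) : ℝ :=
  deriv (deriv u) t / (1 + deriv u t ^ 2) ^ ((3 : ℝ) / 2)

-- `slopeCos p = cos (arctan p)`, the cosine of the inclination of a line of slope `p`.
noncomputable def slopeCos (p : ℝ) : ℝ :=
  (1 + p ^ 2) ^ (-(1 / 2 : ℝ))

lemma hasDerivAt_slopeCos (p : ℝ) :
    HasDerivAt slopeCos (-(p / (1 + p ^ 2) ^ ((3 : ℝ) / 2))) p := by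
  have hpos : 0 < 1 + p ^ 2 := by positivity
  have h := (Real.hasDerivAt_rpow_const (p := -(1 / 2 : ℝ)) (Or.inl hpos.ne')).comp p
    ((hasDerivAt_pow 2 p).const_add 1)
  refine h.congr_deriv ?_
  rw [show -(1 / 2 : ℝ) - 1 = -((3 : ℝ) / 2) by norm_num, Real.rpow_neg hpos.le]
  push_cast
  field_simp

lemma continuous_slopeCos : Continuous slopeCos :=
  continuous_iff_continuousAt.2 fun p => (hasDerivAt_slopeCos p).continuousAt

lemma slopeCos_le_slopeCos_iff {p q : ℝ} : slopeCos q ≤ slopeCos p ↔ p ^ 2 ≤ q ^ 2 := by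
  rw [slopeCos, slopeCos, Real.rpow_le_rpow_iff_of_neg (by positivity) (by positivity)
    (by norm_num), add_le_add_iff_left]

lemma hasDerivAt_slopeCos_deriv {u : ℝ → ℝ} {t : ℝ}
    (h : HasDerivAt (deriv u) (deriv (deriv u) t) t) :
    HasDerivAt (fun t => slopeCos (deriv u t)) (-(deriv u t * graphCurvature u t)) t :=
  ((hasDerivAt_slopeCos _).comp t h).congr_deriv (by rw [graphCurvature]; ring)

lemma MonotoneOn.le_of_tendsto_nhdsGT {α β : Type*} [LinearOrder α] [TopologicalSpace α]
    [OrderTopology α] [DenselyOrdered α] [LinearOrder β] [TopologicalSpace β]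
    [ClosedIicTopology β] {f : α → β} {a c : α} {L : β} (hf : MonotoneOn f (Ioo a c))
    (hL : Tendsto f (𝓝[>] a) (𝓝 L)) {x : α} (hx : x ∈ Ioo a c) : L ≤ f x := by
  have : (𝓝[>] a).NeBot := nhdsGT_neBot_of_exists_gt ⟨x, hx.1⟩
  exact le_of_tendsto hL (by
    filter_upwards [Ioo_mem_nhdsGT hx.1] with y hy using hf ⟨hy.1, hy.2.trans hx.2⟩ hx hy.2.le)

section Comparison

variable {u v α β α' β' : ℝ → ℝ} {a c : ℝ}

theorem sq_deriv_le_of_graphCurvature_le {p₀ q₀ : ℝ}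
    (hu : ∀ s ∈ Ioo a c, DifferentiableAt ℝ (deriv u) (α s))
    (hv : ∀ s ∈ Ioo a c, DifferentiableAt ℝ (deriv v) (β s))
    (hα : ∀ s ∈ Ioo a c, HasDerivAt α (α' s) s) (hβ : ∀ s ∈ Ioo a c, HasDerivAt β (β' s) s)
    (hrel : ∀ s ∈ Ioo a c, deriv u (α s) * α' s = deriv v (β s) * β' s)
    (hrate : ∀ s ∈ Ioo a c, 0 ≤ deriv u (α s) * α' s)
    (hκ : ∀ s ∈ Ioo a c, graphCurvature u (α s) ≤ graphCurvature v (β s))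
    (hp₀ : Tendsto (fun s => deriv u (α s)) (𝓝[>] a) (𝓝 p₀))
    (hq₀ : Tendsto (fun s => deriv v (β s)) (𝓝[>] a) (𝓝 q₀)) (hpq₀ : p₀ ^ 2 ≤ q₀ ^ 2) :
    ∀ s ∈ Ioo a c, deriv u (α s) ^ 2 ≤ deriv v (β s) ^ 2 := by
  set D := fun s => slopeCos (deriv u (α s)) - slopeCos (deriv v (β s))
  have hD : ∀ s ∈ Ioo a c, HasDerivAt D
      (deriv u (α s) * α' s * (graphCurvature v (β s) - graphCurvature u (α s))) s := by
    intro s hs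
    refine ((hasDerivAt_slopeCos_deriv (hu s hs).hasDerivAt).comp s (hα s hs) |>.sub
      ((hasDerivAt_slopeCos_deriv (hv s hs).hasDerivAt).comp s (hβ s hs))).congr_deriv ?_
    linear_combination (-graphCurvature v (β s)) * hrel s hs
  have hDmono : MonotoneOn D (Ioo a c) := by
    refine monotoneOn_of_hasDerivWithinAt_nonneg (convex_Ioo a c)
      (f' := fun s => deriv u (α s) * α' s * (graphCurvature v (β s) - graphCurvature u (α s)))
      (fun s hs => (hD s hs).continuousAt.continuousWithinAt) ?_ ?_ <;> rw [interior_Ioo]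
    · exact fun s hs => (hD s hs).hasDerivWithinAt
    · exact fun s hs => mul_nonneg (hrate s hs) (sub_nonneg.2 (hκ s hs))
  have hDlim : Tendsto D (𝓝[>] a) (𝓝 (slopeCos p₀ - slopeCos q₀)) :=
    ((continuous_slopeCos.tendsto p₀).comp hp₀).sub ((continuous_slopeCos.tendsto q₀).comp hq₀)
  intro s hs
  have h₀ := slopeCos_le_slopeCos_iff.2 hpq₀
  have hs' := hDmono.le_of_tendsto_nhdsGT hDlim hs
  rw [← slopeCos_le_slopeCos_iff]
  simp only [D] at hs'
  linarith

theorem sub_le_sub_of_graphCurvature_le {p₀ q₀ : ℝ} (hac : a ≤ c)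
    (hαc : ContinuousOn α (Icc a c)) (hβc : ContinuousOn β (Icc a c))
    (hu : ∀ s ∈ Ioo a c, DifferentiableAt ℝ (deriv u) (α s))
    (hv : ∀ s ∈ Ioo a c, DifferentiableAt ℝ (deriv v) (β s))
    (hα : ∀ s ∈ Ioo a c, HasDerivAt α (α' s) s) (hβ : ∀ s ∈ Ioo a c, HasDerivAt β (β' s) s)
    (hα' : ∀ s ∈ Ioo a c, 0 ≤ α' s)
    (hu' : ∀ s ∈ Ioo a c, 0 ≤ deriv u (α s)) (hv' : ∀ s ∈ Ioo a c, 0 ≤ deriv v (β s))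
    (hpos : ∀ s ∈ Ioo a c, 0 < deriv u (α s) ∨ 0 < deriv v (β s))
    (hrel : ∀ s ∈ Ioo a c, deriv u (α s) * α' s = deriv v (β s) * β' s)
    (hκ : ∀ s ∈ Ioo a c, graphCurvature u (α s) ≤ graphCurvature v (β s))
    (hp₀ : Tendsto (fun s => deriv u (α s)) (𝓝[>] a) (𝓝 p₀))
    (hq₀ : Tendsto (fun s => deriv v (β s)) (𝓝[>] a) (𝓝 q₀)) (hpq₀ : p₀ ^ 2 ≤ q₀ ^ 2) :
    β c - α c ≤ β a - α a := by
  have hslope := sq_deriv_le_of_graphCurvature_le hu hv hα hβ hrel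
    (fun s hs => mul_nonneg (hu' s hs) (hα' s hs)) hκ hp₀ hq₀ hpq₀
  have hβ'α' : ∀ s ∈ Ioo a c, β' s - α' s ≤ 0 := by
    intro s hs
    have hpq : deriv u (α s) ≤ deriv v (β s) :=
      (pow_le_pow_iff_left₀ (hu' s hs) (hv' s hs) two_ne_zero).1 (hslope s hs)
    have hq : 0 < deriv v (β s) := (hpos s hs).elim (fun h => h.trans_le hpq) id
    have : deriv v (β s) * β' s ≤ deriv v (β s) * α' s :=
      hrel s hs ▸ mul_le_mul_of_nonneg_right hpq (hα' s hs)
    linarith [le_of_mul_le_mul_left this hq]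
  have hanti : AntitoneOn (fun s => β s - α s) (Icc a c) := by
    refine antitoneOn_of_hasDerivWithinAt_nonpos (convex_Icc a c) (hβc.sub hαc)
      (f' := fun s => β' s - α' s) ?_ ?_ <;>
      rw [interior_Icc]
    · exact fun s hs => ((hβ s hs).sub (hα s hs)).hasDerivWithinAt
    · exact hβ'α'
  exact hanti (left_mem_Icc.2 hac) (right_mem_Icc.2 hac) hac

end Comparison

section InverseOnIcc

variable {f : ℝ → ℝ} {a c : ℝ}

lemma invFunOn_Icc_spec (hac : a ≤ c) (hf : ContinuousOn f (Icc a c)) {y : ℝ}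
    (hy : y ∈ Icc (f a) (f c)) :
    invFunOn f (Icc a c) y ∈ Icc a c ∧ f (invFunOn f (Icc a c) y) = y :=
  invFunOn_pos (intermediate_value_Icc hac hf hy)

lemma StrictMonoOn.continuousOn_invFunOn_Icc_s5 (hmono : StrictMonoOn f (Icc a c)) (hac : a ≤ c)
    (hf : ContinuousOn f (Icc a c)) : ContinuousOn (invFunOn f (Icc a c)) (Icc (f a) (f c)) := by
  set g := invFunOn f (Icc a c)
  have hg : ∀ y ∈ Icc (f a) (f c), g y ∈ Icc a c ∧ f (g y) = y :=
    fun y hy => invFunOn_Icc_spec hac hf hy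
  intro y hy
  obtain ⟨hgy, hfgy⟩ := hg y hy
  refine tendsto_order.2 ⟨fun l hl => ?_, fun r hr => ?_⟩
  · rcases lt_or_ge l a with hla | hal
    · filter_upwards [self_mem_nhdsWithin] with z hz using hla.trans_le (hg z hz).1.1
    have hl : l ∈ Icc a c := ⟨hal, hl.le.trans hgy.2⟩
    have hfl : f l < y := hfgy ▸ hmono hl hgy ‹l < g y›
    filter_upwards [self_mem_nhdsWithin, mem_nhdsWithin_of_mem_nhds (Ioi_mem_nhds hfl)]
      with z hz hlz
    exact (hmono.lt_iff_lt hl (hg z hz).1).1 (by rw [(hg z hz).2]; exact hlz)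
  · rcases lt_or_ge c r with hcr | hrc
    · filter_upwards [self_mem_nhdsWithin] with z hz using (hg z hz).1.2.trans_lt hcr
    have hr : r ∈ Icc a c := ⟨hgy.1.trans hr.le, hrc⟩
    have hfr : y < f r := hfgy ▸ hmono hgy hr ‹g y < r›
    filter_upwards [self_mem_nhdsWithin, mem_nhdsWithin_of_mem_nhds (Iio_mem_nhds hfr)]
      with z hz hzr
    exact (hmono.lt_iff_lt (hg z hz).1 hr).1 (by rw [(hg z hz).2]; exact hzr)

lemma StrictMonoOn.hasDerivAt_invFunOn_Icc_s5 (hmono : StrictMonoOn f (Icc a c)) (hac : a ≤ c)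
    (hf : ContinuousOn f (Icc a c)) {y f' : ℝ} (hy : y ∈ Ioo (f a) (f c))
    (hf' : HasDerivAt f f' (invFunOn f (Icc a c) y)) (hne : f' ≠ 0) :
    HasDerivAt (invFunOn f (Icc a c)) f'⁻¹ y :=
  hf'.of_local_left_inverse ((hmono.continuousOn_invFunOn_Icc_s5 hac hf).continuousAt
    (Icc_mem_nhds hy.1 hy.2)) hne (by
      filter_upwards [Ioo_mem_nhds hy.1 hy.2] with z hz
      exact (invFunOn_Icc_spec hac hf (Ioo_subset_Icc_self hz)).2)

end InverseOnIcc

lemma exists_last_eq {α β : Type*} [ConditionallyCompleteLinearOrder α] [TopologicalSpace α]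
    [OrderTopology α] [TopologicalSpace β] [T2Space β] {f g : α → β} {a c : α} (hac : a ≤ c)
    (hf : ContinuousOn f (Icc a c)) (hg : ContinuousOn g (Icc a c)) (ha : f a = g a) :
    ∃ t ∈ Icc a c, f t = g t ∧ ∀ r ∈ Ioc t c, f r ≠ g r := by
  set T := {r ∈ Icc a c | f r = g r}
  have hbdd : BddAbove T := bddAbove_Icc.mono fun r hr => hr.1
  obtain ⟨hmem, heq⟩ := (isClosed_Icc.isClosed_eq hf hg).csSup_mem ⟨a, left_mem_Icc.2 hac, ha⟩ hbdd
  exact ⟨sSup T, hmem, heq, fun r hr hfg =>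
    hr.1.not_ge (le_csSup hbdd ⟨⟨hmem.1.trans hr.1.le, hr.2⟩, hfg⟩)⟩

lemma ContDiffOn.differentiableAt_deriv {u : ℝ → ℝ} {U : Set ℝ} {t : ℝ}
    (hu : ContDiffOn ℝ 2 u U) (hU : IsOpen U) (ht : t ∈ U) : DifferentiableAt ℝ (deriv u) t :=
  ((hu.deriv_of_isOpen hU (by norm_num : (1 : WithTop ℕ∞) + 1 ≤ 2)).differentiableOn
    one_ne_zero t ht).differentiableAt (hU.mem_nhds ht)

lemma ContDiffOn.hasDerivAt_of_mem_Ioo {u : ℝ → ℝ} {a b t : ℝ} (hu : ContDiffOn ℝ 1 u (Icc a b))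
    (ht : t ∈ Ioo a b) : HasDerivAt u (deriv u t) t :=
  (hu.differentiableOn one_ne_zero).hasDerivAt (Icc_mem_nhds ht.1 ht.2)

lemma ContDiffOn.tendsto_deriv_Ioo {u : ℝ → ℝ} {a b t : ℝ} (hab : a < b)
    (hu : ContDiffOn ℝ 1 u (Icc a b)) (ht : t ∈ Icc a b) :
    Tendsto (deriv u) (𝓝[Ioo a b] t) (𝓝 (derivWithin u (Icc a b) t)) := by
  refine ((hu.continuousOn_derivWithin (uniqueDiffOn_Icc hab) le_rfl t ht).mono
    Ioo_subset_Icc_self).congr' ?_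
  filter_upwards [self_mem_nhdsWithin] with s hs
  exact derivWithin_of_mem_nhds (Icc_mem_nhds hs.1 hs.2)

lemma deriv_eq_deriv_of_eventually_le {u v : ℝ → ℝ} {t : ℝ} (hu : DifferentiableAt ℝ u t)
    (hv : DifferentiableAt ℝ v t) (hle : ∀ᶠ s in 𝓝 t, v s ≤ u s) (heq : u t = v t) :
    deriv u t = deriv v t := by
  have hmin : IsLocalMin (u - v) t := hle.mono fun s hs => by simp [heq, hs]
  have := hmin.deriv_eq_zero
  rw [deriv_sub hu hv] at this
  linarith

section Touching

variable {b : ℝ} {u v : ℝ → ℝ}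

lemma nonneg_and_le_on_Icc (hb : 0 < b) (hu : ContinuousOn u (Icc 0 b))
    (hv : ContinuousOn v (Icc 0 b)) (huv : ∀ t ∈ Ioc 0 b, 0 < v t ∧ v t ≤ u t) :
    ∀ t ∈ Icc 0 b, 0 ≤ v t ∧ v t ≤ u t := by
  intro t ht
  have hcl : t ∈ closure (Ioc 0 b) := by rwa [closure_Ioc hb.ne]
  have hu' := (hu t ht).mono Ioc_subset_Icc_self
  have hv' := (hv t ht).mono Ioc_subset_Icc_self
  exact ⟨continuousWithinAt_const.closure_le hcl hv' fun s hs => (huv s hs).1.le,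
    hv'.closure_le hcl hu' fun s hs => (huv s hs).2⟩

lemma exists_last_touch (hu1 : ContDiffOn ℝ 1 u (Icc 0 b)) (hv1 : ContDiffOn ℝ 1 v (Icc 0 b))
    (huv : ∀ t ∈ Ioc 0 b, 0 < v t ∧ v t ≤ u t) (h0 : u 0 = v 0)
    (hu'0 : derivWithin u (Icc 0 b) 0 = 0) {x : ℝ} (hx : x ∈ Ioo 0 b) (hne : u x ≠ v x) :
    ∃ t₀ ∈ Ico 0 x, u t₀ = v t₀ ∧ (∀ r ∈ Ioc t₀ x, v r < u r) ∧
      derivWithin u (Icc 0 b) t₀ ^ 2 ≤ derivWithin v (Icc 0 b) t₀ ^ 2 := by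
  have hsub : Icc 0 x ⊆ Icc 0 b := Icc_subset_Icc_right hx.2.le
  obtain ⟨t₀, ht₀, htouch, hsep⟩ := exists_last_eq hx.1.le (hu1.continuousOn.mono hsub)
    (hv1.continuousOn.mono hsub) h0
  have ht₀x : t₀ < x := ht₀.2.lt_of_ne (by rintro rfl; exact hne htouch)
  refine ⟨t₀, ⟨ht₀.1, ht₀x⟩, htouch, fun r hr => ?_, ?_⟩
  · exact (huv r ⟨ht₀.1.trans_lt hr.1, hr.2.trans hx.2.le⟩).2.lt_of_ne (hsep r hr).symm
  rcases ht₀.1.eq_or_lt with rfl | hpos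
  · rw [hu'0, zero_pow two_ne_zero]
    positivity
  have hmem : Icc 0 b ∈ 𝓝 t₀ := Icc_mem_nhds hpos (ht₀x.trans hx.2)
  rw [derivWithin_of_mem_nhds hmem, derivWithin_of_mem_nhds hmem,
    deriv_eq_deriv_of_eventually_le ((hu1.differentiableOn one_ne_zero).differentiableAt hmem)
      ((hv1.differentiableOn one_ne_zero).differentiableAt hmem) ?_ htouch]
  filter_upwards [Ioo_mem_nhds hpos (ht₀x.trans hx.2)] with s hs using (huv s ⟨hs.1, hs.2.le⟩).2

end Touching

theorem le_of_matching {b t₀ x : ℝ} {u v α β α' β' : ℝ → ℝ}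
    (hu2 : ContDiffOn ℝ 2 u (Ioo 0 b)) (hv2 : ContDiffOn ℝ 2 v (Ioo 0 b))
    (hu1 : ContDiffOn ℝ 1 u (Icc 0 b)) (hv1 : ContDiffOn ℝ 1 v (Icc 0 b))
    (hu' : ∀ t ∈ Ioo 0 b, 0 ≤ deriv u t) (hv' : ∀ t ∈ Ioo 0 b, 0 ≤ deriv v t)
    (hpos : (∀ t ∈ Ioo 0 b, 0 < deriv u t) ∨ ∀ t ∈ Ioo 0 b, 0 < deriv v t)
    (hmain : ∀ t s, 0 < t → t < s → s < b → u t = v s →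
      graphCurvature u t ≤ graphCurvature v s)
    (ht₀ : 0 ≤ t₀) (ht₀x : t₀ < x) (hxb : x < b)
    (hslope₀ : derivWithin u (Icc 0 b) t₀ ^ 2 ≤ derivWithin v (Icc 0 b) t₀ ^ 2)
    (hαc : ContinuousOn α (Icc t₀ x)) (hβc : ContinuousOn β (Icc t₀ x))
    (hαt₀ : α t₀ = t₀) (hβt₀ : β t₀ = t₀)
    (hαU : MapsTo α (Ioo t₀ x) (Ioo 0 b)) (hβU : MapsTo β (Ioo t₀ x) (Ioo 0 b))
    (hα : ∀ s ∈ Ioo t₀ x, HasDerivAt α (α' s) s) (hβ : ∀ s ∈ Ioo t₀ x, HasDerivAt β (β' s) s)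
    (hα' : ∀ s ∈ Ioo t₀ x, 0 ≤ α' s) (hlt : ∀ s ∈ Ioo t₀ x, α s < β s)
    (hmatch : ∀ s ∈ Ioo t₀ x, u (α s) = v (β s)) :
    β x ≤ α x := by
  have hb : 0 < b := ht₀.trans_lt (ht₀x.trans hxb)
  have ht₀b : t₀ ∈ Icc 0 b := ⟨ht₀, (ht₀x.trans hxb).le⟩
  have hrel : ∀ s ∈ Ioo t₀ x, deriv u (α s) * α' s = deriv v (β s) * β' s := by
    intro s hs
    refine (((hu1.hasDerivAt_of_mem_Ioo (hαU hs)).comp s (hα s hs)).congr_of_eventuallyEq ?_).unique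
      ((hv1.hasDerivAt_of_mem_Ioo (hβU hs)).comp s (hβ s hs))
    filter_upwards [Ioo_mem_nhds hs.1 hs.2] with r hr using (hmatch r hr).symm
  have hlim : ∀ γ : ℝ → ℝ, ContinuousOn γ (Icc t₀ x) → γ t₀ = t₀ →
      MapsTo γ (Ioo t₀ x) (Ioo 0 b) → Tendsto γ (𝓝[>] t₀) (𝓝[Ioo 0 b] t₀) := by
    intro γ hγc hγt₀ hγU
    rw [← nhdsWithin_Ioo_eq_nhdsGT ht₀x]
    refine tendsto_nhdsWithin_iff.2 ⟨?_, eventually_mem_nhdsWithin.mono hγU⟩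
    simpa [hγt₀] using ((hγc t₀ (left_mem_Icc.2 ht₀x.le)).mono Ioo_subset_Icc_self).tendsto
  have := sub_le_sub_of_graphCurvature_le ht₀x.le hαc hβc
    (fun s hs => hu2.differentiableAt_deriv isOpen_Ioo (hαU hs))
    (fun s hs => hv2.differentiableAt_deriv isOpen_Ioo (hβU hs)) hα hβ hα'
    (fun s hs => hu' _ (hαU hs)) (fun s hs => hv' _ (hβU hs))
    (fun s hs => hpos.imp (· _ (hαU hs)) (· _ (hβU hs))) hrel
    (fun s hs => hmain _ _ (hαU hs).1 (hlt s hs) (hβU hs).2 (hmatch s hs))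
    ((hu1.tendsto_deriv_Ioo hb ht₀b).comp (hlim α hαc hαt₀ hαU))
    ((hv1.tendsto_deriv_Ioo hb ht₀b).comp (hlim β hβc hβt₀ hβU)) hslope₀
  linarith

theorem exists_matchingMap {F G : ℝ → ℝ} {b t₀ x : ℝ}
    (hF1 : ContDiffOn ℝ 1 F (Icc 0 b)) (hG1 : ContDiffOn ℝ 1 G (Icc 0 b))
    (hF : StrictMonoOn F (Icc 0 b)) (hF' : ∀ t ∈ Ioo 0 b, 0 < deriv F t)
    (ht₀ : 0 ≤ t₀) (ht₀x : t₀ ≤ x) (hxb : x < b)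
    (hG : ∀ s ∈ Icc t₀ x, G s ∈ Ico (F 0) (F b)) (hGpos : ∀ s ∈ Ioc t₀ x, F 0 < G s)
    (htouch : F t₀ = G t₀) :
    ∃ τ : ℝ → ℝ, ContinuousOn τ (Icc t₀ x) ∧ τ t₀ = t₀ ∧
      (∀ s ∈ Icc t₀ x, τ s ∈ Icc 0 b ∧ F (τ s) = G s) ∧ MapsTo τ (Ioc t₀ x) (Ioo 0 b) ∧
      ∀ s ∈ Ioo t₀ x, HasDerivAt τ ((deriv F (τ s))⁻¹ * deriv G s) s := by
  have hb : 0 ≤ b := ht₀.trans (ht₀x.trans hxb.le)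
  have hsub : Icc t₀ x ⊆ Icc 0 b := Icc_subset_Icc ht₀ hxb.le
  set τ := fun s => invFunOn F (Icc 0 b) (G s)
  have hτ : ∀ s ∈ Icc t₀ x, τ s ∈ Icc 0 b ∧ F (τ s) = G s :=
    fun s hs => invFunOn_Icc_spec hb hF1.continuousOn (Ico_subset_Icc_self (hG s hs))
  have hτU : MapsTo τ (Ioc t₀ x) (Ioo 0 b) := fun s hs =>
    have ⟨hτs, hFτ⟩ := hτ s (Ioc_subset_Icc_self hs)
    ⟨(hF.lt_iff_lt (left_mem_Icc.2 hb) hτs).1 (hFτ ▸ hGpos s hs),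
      (hF.lt_iff_lt hτs (right_mem_Icc.2 hb)).1 (hFτ ▸ (hG s (Ioc_subset_Icc_self hs)).2)⟩
  refine ⟨τ, (hF.continuousOn_invFunOn_Icc_s5 hb hF1.continuousOn).comp (hG1.continuousOn.mono hsub)
    fun s hs => Ico_subset_Icc_self (hG s hs), ?_, hτ, hτU, fun s hs => ?_⟩
  · simp only [τ, ← htouch]
    exact hF.injOn.leftInvOn_invFunOn (hsub (left_mem_Icc.2 ht₀x))
  · have hs' := Ioo_subset_Ioc_self hs
    exact (hF.hasDerivAt_invFunOn_Icc_s5 hb hF1.continuousOn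
      ⟨hGpos s hs', (hG s (Ioc_subset_Icc_self hs')).2⟩ (hF1.hasDerivAt_of_mem_Ioo (hτU hs'))
      (hF' _ (hτU hs')).ne').comp s
      (hG1.hasDerivAt_of_mem_Ioo ⟨ht₀.trans_lt hs.1, hs.2.trans hxb⟩)

section Cases

variable {b : ℝ} {u v : ℝ → ℝ}

theorem eq_of_deriv_upper_pos (hb : 0 < b)
    (hu2 : ContDiffOn ℝ 2 u (Ioo 0 b)) (hv2 : ContDiffOn ℝ 2 v (Ioo 0 b))
    (hu1 : ContDiffOn ℝ 1 u (Icc 0 b)) (hv1 : ContDiffOn ℝ 1 v (Icc 0 b))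
    (huv : ∀ t ∈ Ioc 0 b, 0 < v t ∧ v t ≤ u t)
    (hmono : ∀ t ∈ Ioc 0 b, 0 < deriv u t ∧ 0 ≤ deriv v t)
    (hu0 : u 0 = 0) (hu'0 : derivWithin u (Icc 0 b) 0 = 0)
    (hmain : ∀ t s, 0 < t → t < s → s < b → u t = v s →
      graphCurvature u t ≤ graphCurvature v s)
    {x : ℝ} (hx : x ∈ Ioo 0 b) : u x = v x := by
  have hu' : ∀ t ∈ Ioo 0 b, 0 < deriv u t := fun t ht => (hmono t (Ioo_subset_Ioc_self ht)).1
  have hv' : ∀ t ∈ Ioo 0 b, 0 ≤ deriv v t := fun t ht => (hmono t (Ioo_subset_Ioc_self ht)).2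
  have hvu := nonneg_and_le_on_Icc hb hu1.continuousOn hv1.continuousOn huv
  by_contra hne
  obtain ⟨t₀, ht₀, htouch, hgap, hslope₀⟩ := exists_last_touch hu1 hv1 huv
    (by linarith [hvu 0 (left_mem_Icc.2 hb.le)]) hu'0 hx hne
  have hsub : Icc t₀ x ⊆ Icc 0 b := Icc_subset_Icc ht₀.1 hx.2.le
  have hsub' : Ioo t₀ x ⊆ Ioo 0 b := fun s hs => ⟨ht₀.1.trans_lt hs.1, hs.2.trans hx.2⟩
  have hu : StrictMonoOn u (Icc 0 b) := strictMonoOn_of_deriv_pos (convex_Icc 0 b)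
    hu1.continuousOn (by rwa [interior_Icc])
  -- `τ s` is the point where the graph of `u` reaches the height `v s`.
  obtain ⟨τ, hτc, hτt₀, hτ, hτU, hτd⟩ := exists_matchingMap hu1 hv1 hu hu' ht₀.1 ht₀.2.le hx.2
    (fun s hs => ⟨by rw [hu0]; exact (hvu s (hsub hs)).1, (hvu s (hsub hs)).2.trans_lt
      (hu (hsub hs) (right_mem_Icc.2 hb.le) (hs.2.trans_lt hx.2))⟩)
    (fun s hs => by rw [hu0]; exact (huv s ⟨ht₀.1.trans_lt hs.1, hs.2.trans hx.2.le⟩).1) htouch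
  have hτlt : ∀ s ∈ Ioc t₀ x, τ s < s := fun s hs =>
    have ⟨hτs, huτ⟩ := hτ s (Ioc_subset_Icc_self hs)
    (hu.lt_iff_lt hτs (hsub (Ioc_subset_Icc_self hs))).1 (huτ ▸ hgap s hs)
  refine (hτlt x ⟨ht₀.2, le_rfl⟩).not_ge (le_of_matching (α := τ) (β := id)
    (α' := fun s => (deriv u (τ s))⁻¹ * deriv v s) (β' := fun _ => 1) hu2 hv2 hu1 hv1
    (fun t ht => (hu' t ht).le) hv' (Or.inl hu') hmain ht₀.1 ht₀.2 hx.2 hslope₀ hτc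
    continuousOn_id hτt₀ rfl (hτU.mono_left Ioo_subset_Ioc_self) hsub' hτd
    (fun s _ => hasDerivAt_id s) (fun s hs => ?_) (fun s hs => hτlt s (Ioo_subset_Ioc_self hs))
    (fun s hs => (hτ s (Ioo_subset_Icc_self hs)).2))
  exact mul_nonneg (inv_nonneg.2 (hu' _ (hτU (Ioo_subset_Ioc_self hs))).le) (hv' s (hsub' hs))

theorem eq_of_deriv_lower_pos (hb : 0 < b)
    (hu2 : ContDiffOn ℝ 2 u (Ioo 0 b)) (hv2 : ContDiffOn ℝ 2 v (Ioo 0 b))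
    (hu1 : ContDiffOn ℝ 1 u (Icc 0 b)) (hv1 : ContDiffOn ℝ 1 v (Icc 0 b))
    (huv : ∀ t ∈ Ioc 0 b, 0 < v t ∧ v t ≤ u t)
    (hmono : ∀ t ∈ Ioc 0 b, 0 ≤ deriv u t ∧ 0 < deriv v t)
    (hu0 : u 0 = 0) (hu'0 : derivWithin u (Icc 0 b) 0 = 0)
    (hmain : ∀ t s, 0 < t → t < s → s < b → u t = v s →
      graphCurvature u t ≤ graphCurvature v s)
    {x : ℝ} (hx : x ∈ Ioo 0 b) (hbelow : ∀ r ∈ Icc 0 x, u r < v b) : u x = v x := by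
  have hu' : ∀ t ∈ Ioo 0 b, 0 ≤ deriv u t := fun t ht => (hmono t (Ioo_subset_Ioc_self ht)).1
  have hv' : ∀ t ∈ Ioo 0 b, 0 < deriv v t := fun t ht => (hmono t (Ioo_subset_Ioc_self ht)).2
  have hvu := nonneg_and_le_on_Icc hb hu1.continuousOn hv1.continuousOn huv
  have hv0 : v 0 = 0 := by linarith [hvu 0 (left_mem_Icc.2 hb.le)]
  by_contra hne
  obtain ⟨t₀, ht₀, htouch, hgap, hslope₀⟩ :=
    exists_last_touch hu1 hv1 huv (hu0.trans hv0.symm) hu'0 hx hne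
  have hsub : Icc t₀ x ⊆ Icc 0 b := Icc_subset_Icc ht₀.1 hx.2.le
  have hsub' : Ioo t₀ x ⊆ Ioo 0 b := fun s hs => ⟨ht₀.1.trans_lt hs.1, hs.2.trans hx.2⟩
  have hv : StrictMonoOn v (Icc 0 b) := strictMonoOn_of_deriv_pos (convex_Icc 0 b)
    hv1.continuousOn (by rwa [interior_Icc])
  -- `σ r` is the point where the graph of `v` reaches the height `u r`.
  obtain ⟨σ, hσc, hσt₀, hσ, hσU, hσd⟩ := exists_matchingMap hv1 hu1 hv hv' ht₀.1 ht₀.2.le hx.2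
    (fun r hr => ⟨by rw [hv0]; exact (hvu r (hsub hr)).1.trans (hvu r (hsub hr)).2,
      hbelow r (Icc_subset_Icc_left ht₀.1 hr)⟩)
    (fun r hr => by
      have hvr := huv r ⟨ht₀.1.trans_lt hr.1, hr.2.trans hx.2.le⟩
      rw [hv0]; exact hvr.1.trans_le hvr.2) htouch.symm
  have hσgt : ∀ r ∈ Ioc t₀ x, r < σ r := fun r hr =>
    have ⟨hσr, hvσ⟩ := hσ r (Ioc_subset_Icc_self hr)
    (hv.lt_iff_lt (hsub (Ioc_subset_Icc_self hr)) hσr).1 (hvσ ▸ hgap r hr)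
  refine (hσgt x ⟨ht₀.2, le_rfl⟩).not_ge (le_of_matching (α := id) (β := σ)
    (α' := fun _ => 1) (β' := fun r => (deriv v (σ r))⁻¹ * deriv u r) hu2 hv2 hu1 hv1
    hu' (fun t ht => (hv' t ht).le) (Or.inr hv') hmain ht₀.1 ht₀.2 hx.2 hslope₀
    continuousOn_id hσc rfl hσt₀ hsub' (hσU.mono_left Ioo_subset_Ioc_self)
    (fun s _ => hasDerivAt_id s) hσd (fun _ _ => zero_le_one)
    (fun r hr => hσgt r (Ioo_subset_Ioc_self hr))
    (fun r hr => (hσ r (Ioo_subset_Icc_self hr)).2.symm))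

theorem eqOn_of_deriv_lower_pos (hb : 0 < b)
    (hu2 : ContDiffOn ℝ 2 u (Ioo 0 b)) (hv2 : ContDiffOn ℝ 2 v (Ioo 0 b))
    (hu1 : ContDiffOn ℝ 1 u (Icc 0 b)) (hv1 : ContDiffOn ℝ 1 v (Icc 0 b))
    (huv : ∀ t ∈ Ioc 0 b, 0 < v t ∧ v t ≤ u t)
    (hmono : ∀ t ∈ Ioc 0 b, 0 ≤ deriv u t ∧ 0 < deriv v t)
    (hu0 : u 0 = 0) (hu'0 : derivWithin u (Icc 0 b) 0 = 0)
    (hmain : ∀ t s, 0 < t → t < s → s < b → u t = v s →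
      graphCurvature u t ≤ graphCurvature v s) :
    EqOn u v (Ioo 0 b) := by
  -- At the first point `e` where `u` reaches `v b` we would have `u e = v e < v b`.
  suffices hbelow : ∀ x ∈ Ioo 0 b, ∀ r ∈ Icc 0 x, u r < v b from
    fun x hx => eq_of_deriv_lower_pos hb hu2 hv2 hu1 hv1 huv hmono hu0 hu'0 hmain hx (hbelow x hx)
  by_contra! h
  obtain ⟨x, hx, r, hr, hvr⟩ := h
  set S := {r ∈ Icc 0 b | v b ≤ u r}
  have hbdd : BddBelow S := bddBelow_Icc.mono fun r hr => hr.1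
  obtain ⟨he, hve⟩ := (isClosed_Icc.isClosed_le continuousOn_const hu1.continuousOn).csInf_mem
    ⟨r, ⟨hr.1, hr.2.trans hx.2.le⟩, hvr⟩ hbdd
  have heb : sInf S < b :=
    (csInf_le hbdd ⟨⟨hr.1, hr.2.trans hx.2.le⟩, hvr⟩).trans_lt (hr.2.trans_lt hx.2)
  have he0 : 0 < sInf S := he.1.lt_of_ne fun h => by
    rw [← h, hu0] at hve
    linarith [(huv b ⟨hb, le_rfl⟩).1]
  have heq : EqOn u v (Ioo 0 (sInf S)) := fun y hy =>
    eq_of_deriv_lower_pos hb hu2 hv2 hu1 hv1 huv hmono hu0 hu'0 hmain ⟨hy.1, hy.2.trans heb⟩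
      fun r hr => lt_of_not_ge fun h =>
        (csInf_le hbdd ⟨⟨hr.1, hr.2.trans (hy.2.trans heb).le⟩, h⟩).not_gt (hr.2.trans_lt hy.2)
  have hsub : Icc 0 (sInf S) ⊆ Icc 0 b := Icc_subset_Icc_right heb.le
  have hue : u (sInf S) = v (sInf S) := heq.of_subset_closure (hu1.continuousOn.mono hsub)
    (hv1.continuousOn.mono hsub) Ioo_subset_Icc_self (closure_Ioo he0.ne).ge
    (right_mem_Icc.2 he0.le)
  have hv : StrictMonoOn v (Icc 0 b) := strictMonoOn_of_deriv_pos (convex_Icc 0 b)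
    hv1.continuousOn (by rw [interior_Icc]; exact fun t ht => (hmono t ⟨ht.1, ht.2.le⟩).2)
  linarith [hv he (right_mem_Icc.2 hb.le) heb]

end Cases

/-- Lemma 3.1 of Li–Nirenberg, the main lemma for the symmetry theorem for plane curves. -/
theorem stmt_5 (b : ℝ) (hb : 0 < b) (u v : ℝ → ℝ)
    (hu2 : ContDiffOn ℝ 2 u (Set.Ioo 0 b)) (hv2 : ContDiffOn ℝ 2 v (Set.Ioo 0 b))
    (hu1 : ContDiffOn ℝ 1 u (Set.Icc 0 b)) (hv1 : ContDiffOn ℝ 1 v (Set.Icc 0 b))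
    (huv : ∀ t ∈ Set.Ioc 0 b, 0 < v t ∧ v t ≤ u t)
    (hmono : (∀ t ∈ Set.Ioc 0 b, 0 < deriv u t ∧ 0 ≤ deriv v t) ∨
      (∀ t ∈ Set.Ioc 0 b, 0 ≤ deriv u t ∧ 0 < deriv v t))
    (hu0 : u 0 = 0) (hu'0 : derivWithin u (Set.Icc 0 b) 0 = 0)
    (hmain : ∀ t s : ℝ, 0 < t → t < s → s < b → u t = v s →
      deriv (deriv u) t / (1 + (deriv u t) ^ 2) ^ ((3 : ℝ) / 2) ≤
        deriv (deriv v) s / (1 + (deriv v s) ^ 2) ^ ((3 : ℝ) / 2)) :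
    ∀ t ∈ Set.Icc 0 b, u t = v t := by
  have hIoo : EqOn u v (Ioo 0 b) := by
    rcases hmono with hupper | hlower
    · exact fun x hx => eq_of_deriv_upper_pos hb hu2 hv2 hu1 hv1 huv hupper hu0 hu'0 hmain hx
    · exact eqOn_of_deriv_lower_pos hb hu2 hv2 hu1 hv1 huv hlower hu0 hu'0 hmain
  exact hIoo.of_subset_closure hu1.continuousOn hv1.continuousOn Ioo_subset_Icc_self
    (closure_Ioo hb.ne).ge
end

section
/- Let a < b and α < β be real numbers. Let u be C² on (a,b) and C¹ on [a,b], with u'(b) = 0 and u'(t) < 0 for all t ∈ (a,b). Let v be C² on (α,β) and C¹ on [α,β], with v(α) ≤ u(a), v(β) = u(b), v(β) < v(s) < v(α) for all s ∈ (α,β), and v'(α) = 0. Suppose that whenever u(t) = v(s) for some t ∈ (a,b) and s ∈ (α,β), one has u''(t) ≤ v''(s). Then β − α = b − a and v(s) = u(s + b − β) for all s ∈ [α,β]; in particular v is a translate of u and v(α) = u(a). -/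
/-!
Let `L y` be the last point of `[α, β]` where `v = y`, and compare slopes along levels through
`Φ t = v'(L (u t))² - u'(t)²`, for `t` in the interval `(t₀, b)` on which `u t` runs through
`(v β, v α)`. Where the crossing is transversal, `L` is differentiable and
`Φ' = 2 u' (v'' ∘ L ∘ u - u'') ≤ 0`. Where it is tangential, `v'' ≤ 0` at the crossing, so
`u'' ≤ 0` and `-u'²` is a minorant of `Φ` touching it with nonpositive slope; as `Φ` is right
continuous, `Φ` is antitone. Now `Φ ≥ -u'² → 0` at `b`, while `Φ → -u'(t₀)²` at `t₀`, since
`v'(α) = 0`. Hence `Φ ≡ 0` and `u'(t₀) = 0`, i.e. `t₀ = a`: every crossing is transversal with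
`v' ∘ L ∘ u = u'`, so `L ∘ u` has slope `1`, and `v` is a translate of `u`.
-/

open Set Filter Topology

section SignOfDerivative

variable {f : ℝ → ℝ} {f' x : ℝ}

lemma HasDerivAt.eventually_nhdsGT_lt_of_pos (hf : HasDerivAt f f' x) (hf' : 0 < f') :
    ∀ᶠ t in 𝓝[>] x, f x < f t := by
  have hslope : Tendsto (slope f x) (𝓝[>] x) (𝓝 f') :=
    (hasDerivAt_iff_tendsto_slope.1 hf).mono_left (nhdsGT_le_nhdsNE x)
  filter_upwards [hslope.eventually (eventually_gt_nhds hf'), self_mem_nhdsWithin]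
    with t hpos hxt
  rw [slope_def_field] at hpos
  have := (div_pos_iff_of_pos_right (sub_pos.2 (mem_Ioi.1 hxt))).1 hpos
  linarith

lemma HasDerivAt.eventually_nhdsLT_lt_of_neg (hf : HasDerivAt f f' x) (hf' : f' < 0) :
    ∀ᶠ t in 𝓝[<] x, f x < f t := by
  have hslope : Tendsto (slope f x) (𝓝[<] x) (𝓝 f') :=
    (hasDerivAt_iff_tendsto_slope.1 hf).mono_left (nhdsLT_le_nhdsNE x)
  filter_upwards [hslope.eventually (eventually_lt_nhds hf'), self_mem_nhdsWithin]
    with t hneg htx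
  rw [slope_def_field, div_lt_iff_of_neg (sub_neg.2 (mem_Iio.1 htx))] at hneg
  linarith

lemma HasDerivAt.eventually_le_add_mul_nhdsLT (hf : HasDerivAt f f' x) (hf' : f' ≤ 0)
    {ε : ℝ} (hε : 0 < ε) : ∀ᶠ t in 𝓝[<] x, f x ≤ f t + ε * (x - t) := by
  have hslope : Tendsto (slope f x) (𝓝[<] x) (𝓝 f') :=
    (hasDerivAt_iff_tendsto_slope.1 hf).mono_left (nhdsLT_le_nhdsNE x)
  filter_upwards [hslope.eventually (eventually_lt_nhds (hf'.trans_lt hε)),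
    self_mem_nhdsWithin] with t hlt htx
  rw [slope_def_field, div_lt_iff_of_neg (sub_neg.2 (mem_Iio.1 htx))] at hlt
  linarith

end SignOfDerivative

theorem le_of_continuousWithinAt_Ioi_of_eventually_nhdsLT {f : ℝ → ℝ} {p q : ℝ} (hpq : p ≤ q)
    (hcont : ∀ x ∈ Ico p q, ContinuousWithinAt f (Ioi x) x)
    (hdini : ∀ x ∈ Ioc p q, ∀ ε > 0, ∀ᶠ t in 𝓝[<] x, f x ≤ f t + ε * (x - t)) :
    f q ≤ f p := by
  suffices key : ∀ ε > 0, f q ≤ f p + ε * (q - p) by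
    refine le_of_forall_pos_le_add fun δ hδ => (key (δ / (q - p + 1)) (by positivity)).trans ?_
    gcongr
    rw [div_mul_eq_mul_div, div_le_iff₀ (by linarith)]
    nlinarith
  intro ε hε
  -- real induction downwards from `q`
  set S := {x ∈ Icc p q | ∀ z ∈ Icc x q, f q ≤ f z + ε * (q - z)}
  have hqS : q ∈ S := ⟨⟨hpq, le_rfl⟩, fun z hz => by simp [le_antisymm hz.2 hz.1]⟩
  have hbdd : BddBelow S := ⟨p, fun x hx => hx.1.1⟩
  set c := sInf S
  have hpc : p ≤ c := le_csInf ⟨q, hqS⟩ fun x hx => hx.1.1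
  have hcq : c ≤ q := csInf_le hbdd hqS
  have hright : ∀ z ∈ Ioc c q, f q ≤ f z + ε * (q - z) := by
    intro z hz
    obtain ⟨x, hxS, hxz⟩ := exists_lt_of_csInf_lt ⟨q, hqS⟩ hz.1
    exact hxS.2 z ⟨hxz.le, hz.2⟩
  have hc : f q ≤ f c + ε * (q - c) := by
    rcases hcq.eq_or_lt with h | h
    · simp [h]
    · have hlim : Tendsto (fun z => f z + ε * (q - z)) (𝓝[>] c) (𝓝 (f c + ε * (q - c))) :=
        (hcont c ⟨hpc, h⟩).add (by fun_prop : Continuous fun z => ε * (q - z)).continuousWithinAt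
      refine ge_of_tendsto hlim ?_
      filter_upwards [Ioo_mem_nhdsGT h] with z hz using hright z ⟨hz.1, hz.2.le⟩
  rcases hpc.eq_or_lt with h | h
  · rwa [h]
  · obtain ⟨l, hlc, hl⟩ := mem_nhdsLT_iff_exists_Ioo_subset.1 (hdini c ⟨h, hcq⟩ ε hε)
    obtain ⟨x, hx, hxc⟩ := exists_between (max_lt hlc h)
    have hxS : x ∈ S := by
      refine ⟨⟨(le_max_right _ _).trans hx.le, hxc.le.trans hcq⟩, fun z hz => ?_⟩
      rcases lt_or_ge z c with hzc | hcz
      · have : f c ≤ f z + ε * (c - z) := hl ⟨(le_max_left _ _).trans_lt (hx.trans_le hz.1), hzc⟩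
        linarith
      · rcases hcz.eq_or_lt with rfl | hcz
        · exact hc
        · exact hright z ⟨hcz, hz.2⟩
    exact absurd (csInf_le hbdd hxS) (not_le.2 hxc)

theorem antitoneOn_of_continuousWithinAt_Ioi_of_hasDerivAt_minorant {f : ℝ → ℝ} {p q : ℝ}
    (hcont : ∀ x ∈ Ioo p q, ContinuousWithinAt f (Ioi x) x)
    (hminor : ∀ x ∈ Ioo p q, ∃ g : ℝ → ℝ, ∃ d ≤ 0,
      HasDerivAt g d x ∧ g x = f x ∧ ∀ᶠ t in 𝓝[<] x, g t ≤ f t) :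
    AntitoneOn f (Ioo p q) := by
  intro x hx y hy hxy
  refine le_of_continuousWithinAt_Ioi_of_eventually_nhdsLT hxy
    (fun z hz => hcont z ⟨hx.1.trans_le hz.1, hz.2.trans hy.2⟩) fun z hz ε hε => ?_
  obtain ⟨g, d, hd, hg, hgz, hgf⟩ := hminor z ⟨hx.1.trans hz.1, hz.2.trans_lt hy.2⟩
  filter_upwards [hg.eventually_le_add_mul_nhdsLT hd hε, hgf] with t h1 h2
  rw [← hgz]
  linarith

noncomputable def lastCrossing (v : ℝ → ℝ) (α β y : ℝ) : ℝ :=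
  sSup {s ∈ Icc α β | v s = y}

section LastCrossing

variable {v : ℝ → ℝ} {α β y : ℝ}

lemma le_lastCrossing {s : ℝ} (hs : s ∈ Icc α β) (hvs : v s = y) : s ≤ lastCrossing v α β y :=
  le_csSup (bddAbove_Icc.mono fun _ h => h.1) ⟨hs, hvs⟩

variable (hv : ContinuousOn v (Icc α β)) (hαβ : α < β)
include hv hαβ

lemma lastCrossing_mem_crossings (hy : y ∈ Icc (v β) (v α)) :
    lastCrossing v α β y ∈ {s ∈ Icc α β | v s = y} := by
  have hne : {s ∈ Icc α β | v s = y}.Nonempty :=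
    intermediate_value_Icc' hαβ.le hv ⟨hy.1, hy.2⟩
  have hclosed : IsClosed {s ∈ Icc α β | v s = y} :=
    hv.preimage_isClosed_of_isClosed isClosed_Icc isClosed_singleton
  exact hclosed.csSup_mem hne (bddAbove_Icc.mono fun _ h => h.1)

lemma apply_lastCrossing (hy : y ∈ Ioo (v β) (v α)) : v (lastCrossing v α β y) = y :=
  (lastCrossing_mem_crossings hv hαβ ⟨hy.1.le, hy.2.le⟩).2

lemma lastCrossing_mem_Ioo (hy : y ∈ Ioo (v β) (v α)) : lastCrossing v α β y ∈ Ioo α β := by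
  obtain ⟨⟨hα, hβ⟩, hvy⟩ := lastCrossing_mem_crossings hv hαβ ⟨hy.1.le, hy.2.le⟩
  refine ⟨hα.lt_of_ne fun h => ?_, hβ.lt_of_ne fun h => ?_⟩
  · rw [← h] at hvy
    exact hy.2.ne' hvy
  · rw [h] at hvy
    exact hy.1.ne hvy

lemma apply_lt_of_lastCrossing_lt (hy : y ∈ Ioo (v β) (v α)) {s : ℝ}
    (hs : lastCrossing v α β y < s) (hsβ : s ≤ β) : v s < y := by
  by_contra! hys
  have hαs : α ≤ s := (lastCrossing_mem_Ioo hv hαβ hy).1.le.trans hs.le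
  obtain ⟨s', hs', hvs'⟩ := intermediate_value_Icc' hsβ (hv.mono (Icc_subset_Icc hαs le_rfl))
    ⟨hy.1.le, hys⟩
  exact absurd (le_lastCrossing ⟨hαs.trans hs'.1, hs'.2⟩ hvs') (not_le.2 (hs.trans_le hs'.1))

lemma lastCrossing_strictAntiOn : StrictAntiOn (lastCrossing v α β) (Ioo (v β) (v α)) := by
  intro y₁ hy₁ y₂ hy₂ h
  have hL₂ := lastCrossing_mem_Ioo hv hαβ hy₂
  have hv₂ := apply_lastCrossing hv hαβ hy₂
  obtain ⟨s, hs, hvs⟩ := intermediate_value_Icc' hL₂.2.le (hv.mono (Icc_subset_Icc hL₂.1.le le_rfl))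
    ⟨hy₁.1.le, by rw [hv₂]; exact h.le⟩
  have hne : lastCrossing v α β y₂ ≠ s := by rintro rfl; linarith
  exact (hs.1.lt_of_ne hne).trans_le (le_lastCrossing ⟨hL₂.1.le.trans hs.1, hs.2⟩ hvs)

lemma lastCrossing_lt_of_forall_lt (hy : y ∈ Ioo (v β) (v α)) {c : ℝ}
    (h : ∀ s ∈ Icc c β, v s < y) : lastCrossing v α β y < c := by
  by_contra! hc
  have := h _ ⟨hc, (lastCrossing_mem_Ioo hv hαβ hy).2.le⟩
  rw [apply_lastCrossing hv hαβ hy] at this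
  exact lt_irrefl _ this

lemma eventually_lastCrossing_lt {y₀ c : ℝ} (hy₀ : y₀ ∈ Ioc (v β) (v α)) (hc : c ∈ Icc α β)
    (h : ∀ s ∈ Icc c β, v s < y₀) : ∀ᶠ y in 𝓝[<] y₀, lastCrossing v α β y < c := by
  obtain ⟨s₀, hs₀, hmax⟩ := isCompact_Icc.exists_isMaxOn (nonempty_Icc.2 hc.2)
    (hv.mono (Icc_subset_Icc hc.1 le_rfl))
  filter_upwards [Ioo_mem_nhdsLT (max_lt (h s₀ hs₀) hy₀.1)] with y hy
  have hyI : y ∈ Ioo (v β) (v α) := ⟨(le_max_right _ _).trans_lt hy.1, hy.2.trans_le hy₀.2⟩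
  exact lastCrossing_lt_of_forall_lt hv hαβ hyI fun s hs =>
    (hmax hs).trans_lt ((le_max_left _ _).trans_lt hy.1)

lemma tendsto_lastCrossing_nhdsLT (hy : y ∈ Ioo (v β) (v α)) :
    Tendsto (lastCrossing v α β) (𝓝[<] y) (𝓝 (lastCrossing v α β y)) := by
  have hL := lastCrossing_mem_Ioo hv hαβ hy
  refine tendsto_order.2 ⟨fun c hc => ?_, fun c hc => ?_⟩
  · filter_upwards [Ioo_mem_nhdsLT hy.1] with y' hy'
    exact hc.trans (lastCrossing_strictAntiOn hv hαβ ⟨hy'.1, hy'.2.trans hy.2⟩ hy hy'.2)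
  · filter_upwards [eventually_lastCrossing_lt hv hαβ ⟨hy.1, hy.2.le⟩
      ⟨hL.1.le.trans (le_min hc.le hL.2.le), min_le_right c β⟩
      fun s hs => apply_lt_of_lastCrossing_lt hv hαβ hy ((lt_min hc hL.2).trans_le hs.1) hs.2]
      with y' hy' using hy'.trans_le (min_le_left c β)

lemma tendsto_lastCrossing_nhdsLT_left (hvα : ∀ s ∈ Ioc α β, v s < v α) :
    Tendsto (lastCrossing v α β) (𝓝[<] (v α)) (𝓝 α) := by
  have hβα : v β < v α := hvα β ⟨hαβ, le_rfl⟩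
  refine tendsto_order.2 ⟨fun c hc => ?_, fun c hc => ?_⟩
  · filter_upwards [Ioo_mem_nhdsLT hβα] with y hy
    exact hc.trans (lastCrossing_mem_Ioo hv hαβ hy).1
  · filter_upwards [eventually_lastCrossing_lt hv hαβ ⟨hβα, le_rfl⟩
      ⟨le_min hc.le hαβ.le, min_le_right c β⟩
      fun s hs => hvα s ⟨(lt_min hc hαβ).trans_le hs.1, hs.2⟩]
      with y hy using hy.trans_le (min_le_left c β)

lemma tendsto_lastCrossing_nhdsGT (hy : y ∈ Ioo (v β) (v α)) {d : ℝ}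
    (hd : HasDerivAt v d (lastCrossing v α β y)) (hd0 : d < 0) :
    Tendsto (lastCrossing v α β) (𝓝[>] y) (𝓝 (lastCrossing v α β y)) := by
  set s := lastCrossing v α β y
  have hs := lastCrossing_mem_Ioo hv hαβ hy
  refine tendsto_order.2 ⟨fun c hc => ?_, fun c hc => ?_⟩
  · -- take `s₀ < s` near `s` with `v s₀ > y`: the levels in `(y, v s₀)` are crossed in `[s₀, s]`
    obtain ⟨s₀, hvs₀, hs₀s⟩ := ((hd.eventually_nhdsLT_lt_of_neg hd0).and
      (Ioo_mem_nhdsLT (max_lt hc hs.1))).exists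
    rw [apply_lastCrossing hv hαβ hy] at hvs₀
    filter_upwards [Ioo_mem_nhdsGT (lt_min hvs₀ hy.2)] with y' hy'
    obtain ⟨s', hs', hvs'⟩ := intermediate_value_Icc' hs₀s.2.le
      (hv.mono (Icc_subset_Icc ((le_max_right _ _).trans hs₀s.1.le) hs.2.le))
      ⟨by rw [apply_lastCrossing hv hαβ hy]; exact hy'.1.le, (hy'.2.trans_le (min_le_left _ _)).le⟩
    calc c < s₀ := (le_max_left _ _).trans_lt hs₀s.1
      _ ≤ s' := hs'.1
      _ ≤ lastCrossing v α β y' :=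
        le_lastCrossing ⟨(le_max_right _ _).trans (hs₀s.1.le.trans hs'.1),
          hs'.2.trans hs.2.le⟩ hvs'
  · filter_upwards [Ioo_mem_nhdsGT hy.2] with y' hy'
    exact (lastCrossing_strictAntiOn hv hαβ hy ⟨hy.1.trans hy'.1, hy'.2⟩ hy'.1).trans hc

lemma hasDerivAt_lastCrossing (hy : y ∈ Ioo (v β) (v α)) {d : ℝ}
    (hd : HasDerivAt v d (lastCrossing v α β y)) (hd0 : d < 0) :
    HasDerivAt (lastCrossing v α β) d⁻¹ y := by
  have hcont : ContinuousAt (lastCrossing v α β) y :=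
    continuousAt_iff_continuous_left_right.2
      ⟨continuousWithinAt_Iio_iff_Iic.1 (tendsto_lastCrossing_nhdsLT hv hαβ hy),
        continuousWithinAt_Ioi_iff_Ici.1 (tendsto_lastCrossing_nhdsGT hv hαβ hy hd hd0)⟩
  refine hd.of_local_left_inverse hcont hd0.ne ?_
  filter_upwards [isOpen_Ioo.mem_nhds hy] with y' hy' using apply_lastCrossing hv hαβ hy'

lemma deriv_lastCrossing_nonpos (hy : y ∈ Ioo (v β) (v α)) :
    deriv v (lastCrossing v α β y) ≤ 0 := by
  by_contra! hpos
  have hs := lastCrossing_mem_Ioo hv hαβ hy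
  obtain ⟨s, hvs, hs'⟩ := (((differentiableAt_of_deriv_ne_zero hpos.ne').hasDerivAt
    |>.eventually_nhdsGT_lt_of_pos hpos).and (Ioo_mem_nhdsGT hs.2)).exists
  have := apply_lt_of_lastCrossing_lt hv hαβ hy hs'.1 hs'.2.le
  rw [apply_lastCrossing hv hαβ hy] at hvs
  linarith

lemma deriv_deriv_lastCrossing_nonpos (hy : y ∈ Ioo (v β) (v α))
    (hcrit : deriv v (lastCrossing v α β y) = 0) :
    deriv (deriv v) (lastCrossing v α β y) ≤ 0 := by
  by_contra! hpos
  have hs := lastCrossing_mem_Ioo hv hαβ hy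
  have hmin : IsLocalMin v (lastCrossing v α β y) :=
    isLocalMin_of_deriv_deriv_pos hpos hcrit (hv.continuousAt (Icc_mem_nhds hs.1 hs.2))
  obtain ⟨s, hvs, hs'⟩ := ((hmin.filter_mono nhdsWithin_le_nhds).and (Ioo_mem_nhdsGT hs.2)).exists
  have := apply_lt_of_lastCrossing_lt hv hαβ hy hs'.1 hs'.2.le
  rw [apply_lastCrossing hv hαβ hy] at hvs
  linarith

end LastCrossing

section IntervalSmoothness

variable {f : ℝ → ℝ} {a b x : ℝ}

lemma hasDerivAt_of_contDiffOn_Ioo (hf : ContDiffOn ℝ 1 f (Ioo a b)) (hx : x ∈ Ioo a b) :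
    HasDerivAt f (deriv f x) x :=
  ((hf.differentiableOn one_ne_zero x hx).differentiableAt (Ioo_mem_nhds hx.1 hx.2)).hasDerivAt

lemma hasDerivAt_deriv_of_contDiffOn_Ioo (hf : ContDiffOn ℝ 2 f (Ioo a b)) (hx : x ∈ Ioo a b) :
    HasDerivAt (deriv f) (deriv (deriv f) x) x :=
  hasDerivAt_of_contDiffOn_Ioo (hf.deriv_of_isOpen isOpen_Ioo (by norm_num)) hx

lemma tendsto_deriv_nhdsWithin_Ioo (hf : ContDiffOn ℝ 1 f (Icc a b)) (hab : a < b)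
    (hx : x ∈ Icc a b) :
    Tendsto (deriv f) (𝓝[Ioo a b] x) (𝓝 (derivWithin f (Icc a b) x)) := by
  refine (((hf.continuousOn_derivWithin (uniqueDiffOn_Icc hab) le_rfl) x hx).mono_left
    (nhdsWithin_mono _ Ioo_subset_Icc_self)).congr' ?_
  filter_upwards [self_mem_nhdsWithin] with y hy
  exact derivWithin_of_mem_nhds (Icc_mem_nhds hy.1 hy.2)

end IntervalSmoothness

noncomputable def slopeGap (u v : ℝ → ℝ) (α β t : ℝ) : ℝ :=
  deriv v (lastCrossing v α β (u t)) ^ 2 - deriv u t ^ 2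

section SlopeGap

variable {a b α β t t₀ : ℝ} {u v : ℝ → ℝ}

lemma hasDerivAt_slopeGap (hu : ContDiffOn ℝ 2 u (Ioo a b)) (hv : ContDiffOn ℝ 2 v (Ioo α β))
    (hvc : ContinuousOn v (Icc α β)) (hαβ : α < β) (ht : t ∈ Ioo a b)
    (hy : u t ∈ Ioo (v β) (v α)) (hreg : deriv v (lastCrossing v α β (u t)) < 0) :
    HasDerivAt (slopeGap u v α β)
      (2 * deriv u t * (deriv (deriv v) (lastCrossing v α β (u t)) - deriv (deriv u) t)) t := by
  have hs := lastCrossing_mem_Ioo hvc hαβ hy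
  have hLu : HasDerivAt (fun t => lastCrossing v α β (u t))
      ((deriv v (lastCrossing v α β (u t)))⁻¹ * deriv u t) t :=
    (hasDerivAt_lastCrossing hvc hαβ hy (hasDerivAt_of_contDiffOn_Ioo (hv.of_le (by norm_num)) hs)
      hreg).comp t (hasDerivAt_of_contDiffOn_Ioo (hu.of_le (by norm_num)) ht)
  refine ((((hasDerivAt_deriv_of_contDiffOn_Ioo hv hs).comp t hLu).pow 2).sub
    ((hasDerivAt_deriv_of_contDiffOn_Ioo hu ht).pow 2)).congr_deriv ?_
  have := hreg.ne
  simp only [Function.comp_apply]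
  field_simp
  ring

lemma continuousWithinAt_slopeGap_Ioi (hu : ContDiffOn ℝ 2 u (Ioo a b))
    (hv : ContDiffOn ℝ 2 v (Ioo α β)) (hvc : ContinuousOn v (Icc α β)) (hαβ : α < β)
    (ht : t ∈ Ioo a b) (hu't : deriv u t < 0) (hy : u t ∈ Ioo (v β) (v α)) :
    ContinuousWithinAt (slopeGap u v α β) (Ioi t) t := by
  have hu' := hasDerivAt_of_contDiffOn_Ioo (hu.of_le (by norm_num)) ht
  have hdown : Tendsto u (𝓝[>] t) (𝓝[<] (u t)) :=
    tendsto_nhdsWithin_iff.2 ⟨hu'.continuousAt.continuousWithinAt,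
      (hu'.neg.eventually_nhdsGT_lt_of_pos (neg_pos.2 hu't)).mono fun _ h => neg_lt_neg_iff.1 h⟩
  have hv' := (hasDerivAt_deriv_of_contDiffOn_Ioo hv (lastCrossing_mem_Ioo hvc hαβ hy)).continuousAt
  exact ((hv'.tendsto.comp ((tendsto_lastCrossing_nhdsLT hvc hαβ hy).comp hdown)).pow 2).sub
    ((hasDerivAt_deriv_of_contDiffOn_Ioo hu ht).continuousAt.continuousWithinAt.pow 2)

theorem antitoneOn_slopeGap (hu : ContDiffOn ℝ 2 u (Ioo a b))
    (hu' : ∀ t ∈ Ioo a b, deriv u t < 0) (hv : ContDiffOn ℝ 2 v (Ioo α β))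
    (hvc : ContinuousOn v (Icc α β)) (hαβ : α < β)
    (hcomp : ∀ t ∈ Ioo a b, ∀ s ∈ Ioo α β, u t = v s → deriv (deriv u) t ≤ deriv (deriv v) s)
    (ht₀ : a ≤ t₀) (hlev : ∀ t ∈ Ioo t₀ b, u t ∈ Ioo (v β) (v α)) :
    AntitoneOn (slopeGap u v α β) (Ioo t₀ b) := by
  have hsub : Ioo t₀ b ⊆ Ioo a b := Ioo_subset_Ioo_left ht₀
  refine antitoneOn_of_continuousWithinAt_Ioi_of_hasDerivAt_minorant (fun t ht =>
    continuousWithinAt_slopeGap_Ioi hu hv hvc hαβ (hsub ht) (hu' t (hsub ht)) (hlev t ht))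
    fun t ht => ?_
  have hy := hlev t ht
  have hs := lastCrossing_mem_Ioo hvc hαβ hy
  have hcmp := hcomp t (hsub ht) _ hs (apply_lastCrossing hvc hαβ hy).symm
  have hu't := hu' t (hsub ht)
  rcases (deriv_lastCrossing_nonpos hvc hαβ hy).lt_or_eq with hreg | hcrit
  · exact ⟨_, _, mul_nonpos_of_nonpos_of_nonneg (by linarith) (sub_nonneg.2 hcmp),
      hasDerivAt_slopeGap hu hv hvc hαβ (hsub ht) hy hreg, rfl, .of_forall fun _ => le_rfl⟩
  · -- at a tangential crossing `v'' ≤ 0`, hence `u'' ≤ 0`, and `-(u')²` is a minorant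
    have hu''t := hcmp.trans (deriv_deriv_lastCrossing_nonpos hvc hαβ hy hcrit)
    refine ⟨fun t => -deriv u t ^ 2, _, ?_,
      ((hasDerivAt_deriv_of_contDiffOn_Ioo hu (hsub ht)).pow 2).neg, by simp [slopeGap, hcrit],
      .of_forall fun t' => ?_⟩
    · norm_num
      nlinarith
    · simp only [slopeGap]
      linarith [sq_nonneg (deriv v (lastCrossing v α β (u t')))]

lemma slopeGap_nonneg (hanti : AntitoneOn (slopeGap u v α β) (Ioo t₀ b))
    (hu'b : Tendsto (deriv u) (𝓝[<] b) (𝓝 0)) (ht : t ∈ Ioo t₀ b) :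
    0 ≤ slopeGap u v α β t := by
  have hlim : Tendsto (fun s => -deriv u s ^ 2) (𝓝[<] b) (𝓝 0) := by
    simpa using (hu'b.pow 2).neg
  refine le_of_tendsto hlim ?_
  filter_upwards [Ioo_mem_nhdsLT ht.2] with s hs
  calc -deriv u s ^ 2 ≤ slopeGap u v α β s := by
        simp only [slopeGap]
        linarith [sq_nonneg (deriv v (lastCrossing v α β (u s)))]
    _ ≤ slopeGap u v α β t := hanti ht ⟨ht.1.trans hs.1, hs.2⟩ hs.1.le

lemma slopeGap_eq_zero {d : ℝ} (hanti : AntitoneOn (slopeGap u v α β) (Ioo t₀ b))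
    (hu'b : Tendsto (deriv u) (𝓝[<] b) (𝓝 0))
    (hlim : Tendsto (slopeGap u v α β) (𝓝[>] t₀) (𝓝 (-d ^ 2))) (ht₀b : t₀ < b) :
    d = 0 ∧ ∀ t ∈ Ioo t₀ b, slopeGap u v α β t = 0 := by
  have hle : ∀ t ∈ Ioo t₀ b, slopeGap u v α β t ≤ -d ^ 2 := fun t ht => by
    refine ge_of_tendsto hlim ?_
    filter_upwards [Ioo_mem_nhdsGT ht.1] with s hs using hanti ⟨hs.1, hs.2.trans ht.2⟩ ht hs.2.le
  obtain ⟨t, ht⟩ := nonempty_Ioo.2 ht₀b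
  have hd : d = 0 := by nlinarith [hle t ht, slopeGap_nonneg hanti hu'b ht]
  refine ⟨hd, fun t ht => le_antisymm ?_ (slopeGap_nonneg hanti hu'b ht)⟩
  simpa [hd] using hle t ht

lemma tendsto_lastCrossing_comp_nhdsGT (hvc : ContinuousOn v (Icc α β)) (hαβ : α < β)
    (hvα : ∀ s ∈ Ioc α β, v s < v α) (hu : ContinuousOn u (Icc t₀ b))
    (hut₀ : u t₀ = v α) (ht₀b : t₀ < b) (hlev : ∀ t ∈ Ioo t₀ b, u t ∈ Ioo (v β) (v α)) :
    Tendsto (fun t => lastCrossing v α β (u t)) (𝓝[>] t₀) (𝓝[Ioo α β] α) := by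
  have hlev' : ∀ᶠ t in 𝓝[>] t₀, u t ∈ Ioo (v β) (v α) :=
    Filter.eventually_of_mem (Ioo_mem_nhdsGT ht₀b) hlev
  have hu₀ : ContinuousWithinAt u (Ioi t₀) t₀ :=
    (hu t₀ (left_mem_Icc.2 ht₀b.le)).mono_of_mem_nhdsWithin (Icc_mem_nhdsGT ht₀b)
  have hup : Tendsto u (𝓝[>] t₀) (𝓝[<] (v α)) :=
    tendsto_nhdsWithin_iff.2 ⟨hut₀ ▸ hu₀, hlev'.mono fun _ h => h.2⟩
  exact tendsto_nhdsWithin_iff.2 ⟨(tendsto_lastCrossing_nhdsLT_left hvc hαβ hvα).comp hup,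
    hlev'.mono fun _ h => lastCrossing_mem_Ioo hvc hαβ h⟩

lemma tendsto_slopeGap_nhdsGT (hab : a < b) (hu : ContDiffOn ℝ 1 u (Icc a b))
    (hv : ContDiffOn ℝ 1 v (Icc α β)) (hαβ : α < β) (hv'α : derivWithin v (Icc α β) α = 0)
    (ht₀ : t₀ ∈ Ico a b)
    (hL : Tendsto (fun t => lastCrossing v α β (u t)) (𝓝[>] t₀) (𝓝[Ioo α β] α)) :
    Tendsto (slopeGap u v α β) (𝓝[>] t₀) (𝓝 (-derivWithin u (Icc a b) t₀ ^ 2)) := by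
  have hv' : Tendsto (fun t => deriv v (lastCrossing v α β (u t))) (𝓝[>] t₀) (𝓝 0) :=
    hv'α ▸ (tendsto_deriv_nhdsWithin_Ioo hv hαβ (left_mem_Icc.2 hαβ.le)).comp hL
  have hu' : Tendsto (deriv u) (𝓝[>] t₀) (𝓝 (derivWithin u (Icc a b) t₀)) := by
    refine (tendsto_deriv_nhdsWithin_Ioo hu hab ⟨ht₀.1, ht₀.2.le⟩).mono_left ?_
    rw [← nhdsWithin_Ioo_eq_nhdsGT ht₀.2]
    exact nhdsWithin_mono _ (Ioo_subset_Ioo_left ht₀.1)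
  have := (hv'.pow 2).sub (hu'.pow 2)
  rwa [zero_pow two_ne_zero, zero_sub] at this

end SlopeGap

section Translate

variable {a b α β : ℝ} {u v : ℝ → ℝ}

lemma exists_mem_Ico_apply_eq_of_strictAntiOn (hab : a < b) (hu : ContinuousOn u (Icc a b))
    (hanti : StrictAntiOn u (Icc a b)) {y : ℝ} (hy : y ∈ Ioc (u b) (u a)) :
    ∃ t₀ ∈ Ico a b, u t₀ = y ∧ ∀ t ∈ Ioo t₀ b, u t ∈ Ioo (u b) y := by
  obtain ⟨t₀, ht₀, hut₀⟩ := intermediate_value_Icc' hab.le hu ⟨hy.1.le, hy.2⟩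
  have ht₀b : t₀ < b := ht₀.2.lt_of_ne (by rintro rfl; exact hy.1.ne hut₀)
  refine ⟨t₀, ⟨ht₀.1, ht₀b⟩, hut₀, fun t ht => ?_⟩
  have ht' : t ∈ Icc a b := ⟨ht₀.1.trans ht.1.le, ht.2.le⟩
  exact ⟨hanti ht' (right_mem_Icc.2 hab.le) ht.2, hut₀ ▸ hanti ht₀ ht' ht.1⟩

lemma eq_left_of_derivWithin_eq_zero {t₀ : ℝ} (hu' : ∀ t ∈ Ioo a b, deriv u t < 0)
    (ht₀ : t₀ ∈ Ico a b) (h : derivWithin u (Icc a b) t₀ = 0) : t₀ = a := by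
  by_contra hne
  have ht₀' : t₀ ∈ Ioo a b := ⟨ht₀.1.lt_of_ne' hne, ht₀.2⟩
  have := hu' t₀ ht₀'
  rw [← derivWithin_of_mem_nhds (Icc_mem_nhds ht₀'.1 ht₀'.2), h] at this
  exact lt_irrefl _ this

lemma lastCrossing_comp_eq_add (hab : a < b) (hu : ContDiffOn ℝ 1 u (Ioo a b))
    (hu' : ∀ t ∈ Ioo a b, deriv u t < 0) (hv : ContDiffOn ℝ 1 v (Ioo α β))
    (hvc : ContinuousOn v (Icc α β)) (hαβ : α < β)
    (hlev : ∀ t ∈ Ioo a b, u t ∈ Ioo (v β) (v α))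
    (hslope : ∀ t ∈ Ioo a b, deriv v (lastCrossing v α β (u t)) = deriv u t)
    (hlim : Tendsto (fun t => lastCrossing v α β (u t)) (𝓝[>] a) (𝓝 α)) :
    ∀ t ∈ Ioo a b, lastCrossing v α β (u t) = t + (α - a) := by
  have hd : ∀ t ∈ Ioo a b, HasDerivAt (fun t => lastCrossing v α β (u t)) 1 t := by
    intro t ht
    have hv' : HasDerivAt v (deriv u t) (lastCrossing v α β (u t)) := by
      rw [← hslope t ht]
      exact hasDerivAt_of_contDiffOn_Ioo hv (lastCrossing_mem_Ioo hvc hαβ (hlev t ht))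
    have := (hasDerivAt_lastCrossing hvc hαβ (hlev t ht) hv' (hu' t ht)).comp t
      (hasDerivAt_of_contDiffOn_Ioo hu ht)
    rwa [inv_mul_cancel₀ (hu' t ht).ne] at this
  obtain ⟨c, hc⟩ := isOpen_Ioo.exists_eq_add_of_deriv_eq isPreconnected_Ioo
    (fun t ht => (hd t ht).differentiableAt.differentiableWithinAt) differentiableOn_id
    fun t ht => by simp [(hd t ht).deriv]
  have hlim' : Tendsto (fun t => lastCrossing v α β (u t)) (𝓝[>] a) (𝓝 (a + c)) := by
    refine ((continuous_add_const c).tendsto a).mono_left nhdsWithin_le_nhds |>.congr' ?_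
    filter_upwards [Ioo_mem_nhdsGT hab] with t ht using (hc ht).symm
  intro t ht
  rw [show lastCrossing v α β (u t) = t + c from hc ht, tendsto_nhds_unique hlim hlim']
  ring

theorem translate_of_lastCrossing_comp_eq_add (hab : a < b) (huc : ContinuousOn u (Icc a b))
    (hvc : ContinuousOn v (Icc α β)) (hαβ : α < β) (hvβ_lt : ∀ s ∈ Ioo α β, v β < v s)
    (hvβ : v β = u b) (hvα : v α = u a) (hlev : ∀ t ∈ Ioo a b, u t ∈ Ioo (v β) (v α))
    (hshift : ∀ t ∈ Ioo a b, lastCrossing v α β (u t) = t + (α - a)) :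
    β - α = b - a ∧ ∀ s ∈ Icc α β, v s = u (s + b - β) := by
  have hvu : ∀ t ∈ Ioo a b, t + (α - a) ∈ Ioo α β ∧ v (t + (α - a)) = u t := fun t ht =>
    hshift t ht ▸ ⟨lastCrossing_mem_Ioo hvc hαβ (hlev t ht), apply_lastCrossing hvc hαβ (hlev t ht)⟩
  have hle : b - a ≤ β - α := by
    by_contra! h
    have := (hvu (β - α + a) ⟨by linarith, by linarith⟩).1.2
    linarith
  have hge : β - α ≤ b - a := by
    by_contra! h
    have hs₁ : b + (α - a) ∈ Ioo α β := ⟨by linarith, by linarith⟩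
    have hv₁ : Tendsto (fun t => v (t + (α - a))) (𝓝[<] b) (𝓝 (v (b + (α - a)))) :=
      ((hvc.continuousAt (Icc_mem_nhds hs₁.1 hs₁.2)).tendsto.comp
        ((continuous_add_const _).tendsto b)).mono_left nhdsWithin_le_nhds
    have hu₁ : Tendsto u (𝓝[<] b) (𝓝 (u b)) := by
      refine (huc b (right_mem_Icc.2 hab.le)).tendsto.mono_left ?_
      rw [← nhdsWithin_Ioo_eq_nhdsLT hab]
      exact nhdsWithin_mono _ Ioo_subset_Icc_self
    have : v (b + (α - a)) = u b := tendsto_nhds_unique hv₁ <| hu₁.congr' <| by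
      filter_upwards [Ioo_mem_nhdsLT hab] with t ht using (hvu t ht).2.symm
    exact (hvβ_lt _ hs₁).ne' (this.trans hvβ.symm)
  refine ⟨le_antisymm hge hle, fun s hs => ?_⟩
  rcases hs.1.eq_or_lt with rfl | hαs
  · rw [hvα]; congr 1; linarith
  rcases hs.2.eq_or_lt with rfl | hsβ
  · rw [hvβ]; congr 1; linarith
  rw [← (hvu (s + b - β) ⟨by linarith, by linarith⟩).2]
  congr 1
  linarith

end Translate

/-- Lemma 4.1′ of Li–Nirenberg: v is a translate of u. -/
theorem stmt_7 (a b α β : ℝ) (hab : a < b) (hαβ : α < β) (u v : ℝ → ℝ)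
    (hu2 : ContDiffOn ℝ 2 u (Set.Ioo a b)) (hu1 : ContDiffOn ℝ 1 u (Set.Icc a b))
    (hu'b : derivWithin u (Set.Icc a b) b = 0)
    (hu' : ∀ t ∈ Set.Ioo a b, deriv u t < 0)
    (hv2 : ContDiffOn ℝ 2 v (Set.Ioo α β)) (hv1 : ContDiffOn ℝ 1 v (Set.Icc α β))
    (hvα : v α ≤ u a) (hvβ : v β = u b)
    (hvbet : ∀ s ∈ Set.Ioo α β, v β < v s ∧ v s < v α)
    (hv'α : derivWithin v (Set.Icc α β) α = 0)
    (hmain : ∀ t ∈ Set.Ioo a b, ∀ s ∈ Set.Ioo α β, u t = v s →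
      deriv (deriv u) t ≤ deriv (deriv v) s) :
    β - α = b - a ∧ (∀ s ∈ Set.Icc α β, v s = u (s + b - β)) ∧ v α = u a := by
  have hβα : v β < v α := by
    have := hvbet ((α + β) / 2) ⟨by linarith, by linarith⟩
    linarith [this.1, this.2]
  have hvtop : ∀ s ∈ Ioc α β, v s < v α := fun s hs =>
    hs.2.eq_or_lt.elim (fun h => h ▸ hβα) fun h => (hvbet s ⟨hs.1, h⟩).2
  obtain ⟨t₀, ht₀, hut₀, hlev⟩ := exists_mem_Ico_apply_eq_of_strictAntiOn hab hu1.continuousOn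
    (strictAntiOn_of_deriv_neg (convex_Icc a b) hu1.continuousOn (by simpa using hu'))
    ⟨hvβ ▸ hβα, hvα⟩
  rw [← hvβ] at hlev
  have hL := tendsto_lastCrossing_comp_nhdsGT hv1.continuousOn hαβ hvtop
    (hu1.continuousOn.mono (Icc_subset_Icc ht₀.1 le_rfl)) hut₀ ht₀.2 hlev
  have hu'b' : Tendsto (deriv u) (𝓝[<] b) (𝓝 0) := hu'b ▸
    (tendsto_deriv_nhdsWithin_Ioo hu1 hab (right_mem_Icc.2 hab.le)).mono_left
      (nhdsWithin_Ioo_eq_nhdsLT hab).ge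
  obtain ⟨hu't₀, hgap⟩ := slopeGap_eq_zero
    (antitoneOn_slopeGap hu2 hu' hv2 hv1.continuousOn hαβ hmain ht₀.1 hlev) hu'b'
    (tendsto_slopeGap_nhdsGT hab hu1 hv1 hαβ hv'α ht₀ hL) ht₀.2
  obtain rfl := eq_left_of_derivWithin_eq_zero hu' ht₀ hu't₀
  have hslope : ∀ t ∈ Ioo t₀ b, deriv v (lastCrossing v α β (u t)) = deriv u t := fun t ht => by
    have := deriv_lastCrossing_nonpos hv1.continuousOn hαβ (hlev t ht)
    have := hgap t ht
    simp only [slopeGap] at this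
    nlinarith [hu' t ht]
  have hshift := lastCrossing_comp_eq_add hab (hu2.of_le (by norm_num)) hu'
    (hv2.of_le (by norm_num)) hv1.continuousOn hαβ hlev hslope (hL.mono_right nhdsWithin_le_nhds)
  obtain ⟨hlen, htrans⟩ := translate_of_lastCrossing_comp_eq_add hab hu1.continuousOn
    hv1.continuousOn hαβ (fun s hs => (hvbet s hs).1) hvβ hut₀.symm hlev hshift
  exact ⟨hlen, htrans, hut₀.symm⟩
end

section
/- Let K : ℝ³ → ℝ be continuous, with partial derivatives ∂K/∂p and ∂K/∂q (in the second and third arguments) existing and continuous on ℝ³, and ∂K/∂q(s,p,q) > 0 for all (s,p,q) ∈ ℝ³. Let b > 0 and let u, v be real functions that are C² on (0,b) with u(t) ≥ v(t) for all t ∈ (0,b). Assume max{u'(t), v'(t)} > 0 for every t ∈ (0,b), and assume: whenever u(t) = v(s) with 0 < t < s < b, one has K(u(t), u'(t), u''(t)) ≤ K(v(s), v'(s), v''(s)). Then either u(t) > v(t) for all t ∈ (0,b), or u(t) = v(t) for all t ∈ (0,b). -/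
/-!
Near a point `t₀` where `u` touches `v` from above, `u' = v' > 0`, so both functions can be
inverted there: write `ρ = u⁻¹`, `σ = v⁻¹`, `P = u' ∘ ρ`, `Q = v' ∘ σ` as functions of the level
`y`. Then `v ≤ u` gives `ρ ≤ σ`, and the hypothesis compares `K` along each level with `ρ < σ`.
Mean value estimates in the `p`- and `q`-slots of `K` (with `∂K/∂q` bounded below on a compact
box) turn this into `(Q² - P²)' ≥ -M |Q² - P²|`, whereas `(σ - ρ)' = 1/Q - 1/P` has the sign
opposite to `Q² - P²`. A Grönwall argument makes `Q² - P² ≤ 0` below the level `u t₀` and `≥ 0`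
above it, so `σ - ρ ≥ 0` increases up to its zero at `u t₀` and decreases after it, hence
vanishes: `u = v` near `t₀`. Thus `{u = v}` is open in `(0, b)`, and so is `{v < u}`;
connectedness finishes the proof.
-/

open Set Filter Topology Function

namespace LiNirenberg

theorem pos_of_pos_of_neg_mul_abs_le_deriv {g g' : ℝ → ℝ} {M a b : ℝ} (hab : a ≤ b)
    (hg : ∀ x ∈ Icc a b, HasDerivAt g (g' x) x)
    (hgrow : ∀ x ∈ Icc a b, g x ≠ 0 → -(M * |g x|) ≤ g' x) (ha : 0 < g a) : 0 < g b := by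
  -- `g` stays above the barrier `(g a / 2) e^{-k (x - a)}`, which decays faster than `g` can
  set k := |M| + 1 with hk
  set E : ℝ → ℝ := fun x => g a / 2 * Real.exp (-k * (x - a))
  have hE : ∀ x, HasDerivAt (fun x => -E x) (k * E x) x := fun x => by
    have := ((((hasDerivAt_id x).sub_const a).const_mul (-k)).exp.const_mul (g a / 2)).neg
    exact this.congr_deriv (by simp only [E, id]; ring)
  have hbarrier : ∀ x ∈ Icc a b, -g x ≤ -E x :=
    image_le_of_deriv_right_lt_deriv_boundary (f := fun x => -g x) (f' := fun x => -g' x)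
      (fun x hx => (hg x hx).continuousAt.continuousWithinAt.neg)
      (fun x hx => (hg x (Ico_subset_Icc_self hx)).neg.hasDerivWithinAt)
      (by simp only [E, sub_self, mul_zero, Real.exp_zero]; linarith) hE
      (fun x hx hgx => by
        have hEx : 0 < E x := by positivity
        have hgrow := hgrow x (Ico_subset_Icc_self hx) (by linarith)
        rw [abs_of_pos (by linarith : 0 < g x), show g x = E x by linarith] at hgrow
        rw [hk]
        nlinarith [mul_le_mul_of_nonneg_right (le_abs_self M) hEx.le])
  have hEb : 0 < E b := by positivity
  linarith [hbarrier b ⟨hab, le_rfl⟩]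

theorem eq_zero_Ioc_of_gronwall {g g' h h' : ℝ → ℝ} {M a b : ℝ}
    (hg : ∀ x ∈ Ioc a b, HasDerivAt g (g' x) x) (hh : ∀ x ∈ Ioc a b, HasDerivAt h (h' x) x)
    (hgrow : ∀ x ∈ Ioc a b, g x ≠ 0 → -(M * |g x|) ≤ g' x)
    (hsign : ∀ x ∈ Ioc a b, g x ≤ 0 → 0 ≤ h' x) (hpos : ∀ x ∈ Ioc a b, 0 ≤ h x)
    (hgb : g b = 0) (hhb : h b = 0) : ∀ x ∈ Ioc a b, h x = 0 := by
  have hg_nonpos : ∀ x ∈ Ioc a b, g x ≤ 0 := fun x hx => not_lt.1 fun hgx =>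
    have hsub : Icc x b ⊆ Ioc a b := fun y hy => ⟨hx.1.trans_le hy.1, hy.2⟩
    (pos_of_pos_of_neg_mul_abs_le_deriv hx.2 (fun y hy => hg y (hsub hy))
      (fun y hy => hgrow y (hsub hy)) hgx).ne' hgb
  have hmono : MonotoneOn h (Ioc a b) :=
    monotoneOn_of_hasDerivWithinAt_nonneg (convex_Ioc a b)
      (fun x hx => (hh x hx).continuousAt.continuousWithinAt)
      (fun x hx => (hh x (interior_subset hx)).hasDerivWithinAt)
      (fun x hx => hsign x (interior_subset hx) (hg_nonpos x (interior_subset hx)))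
  intro x hx
  exact le_antisymm (hhb ▸ hmono hx (right_mem_Ioc.2 (hx.1.trans_le hx.2)) hx.2) (hpos x hx)

theorem eq_zero_of_gronwall {g g' h h' : ℝ → ℝ} {M y₁ y₀ y₂ : ℝ} (hy₀ : y₀ ∈ Ioo y₁ y₂)
    (hg : ∀ x ∈ Ioo y₁ y₂, HasDerivAt g (g' x) x) (hh : ∀ x ∈ Ioo y₁ y₂, HasDerivAt h (h' x) x)
    (hgrow : ∀ x ∈ Ioo y₁ y₂, g x ≠ 0 → -(M * |g x|) ≤ g' x)
    (hsign_nonpos : ∀ x ∈ Ioo y₁ y₂, g x ≤ 0 → 0 ≤ h' x)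
    (hsign_nonneg : ∀ x ∈ Ioo y₁ y₂, 0 ≤ g x → h' x ≤ 0)
    (hpos : ∀ x ∈ Ioo y₁ y₂, 0 ≤ h x) (hg₀ : g y₀ = 0) (hh₀ : h y₀ = 0) :
    ∀ x ∈ Ioo y₁ y₂, h x = 0 := by
  intro x hx
  rcases le_total x y₀ with hxy | hxy
  · have hsub : Ioc y₁ y₀ ⊆ Ioo y₁ y₂ := fun z hz => ⟨hz.1, hz.2.trans_lt hy₀.2⟩
    exact eq_zero_Ioc_of_gronwall (fun z hz => hg z (hsub hz)) (fun z hz => hh z (hsub hz))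
      (fun z hz => hgrow z (hsub hz)) (fun z hz => hsign_nonpos z (hsub hz))
      (fun z hz => hpos z (hsub hz)) hg₀ hh₀ x ⟨hx.1, hxy⟩
  · -- `z ↦ -g (-z)` and `z ↦ h (-z)` satisfy the same hypotheses on `(-y₂, -y₀]`
    have hsub : ∀ z ∈ Ioc (-y₂) (-y₀), -z ∈ Ioo y₁ y₂ := fun z hz =>
      ⟨by linarith [hy₀.1, hz.2], by linarith [hz.1]⟩
    have := eq_zero_Ioc_of_gronwall (g := fun z => -g (-z)) (g' := fun z => g' (-z))
      (h := fun z => h (-z)) (h' := fun z => -h' (-z)) (M := M)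
      (fun z hz => by
        simpa [comp_def, Pi.neg_def] using ((hg _ (hsub z hz)).comp z (hasDerivAt_neg z)).neg)
      (fun z hz => by simpa [comp_def] using (hh _ (hsub z hz)).comp z (hasDerivAt_neg z))
      (fun z hz hne => by simpa using hgrow _ (hsub z hz) (by simpa using hne))
      (fun z hz hgz => by simpa using hsign_nonneg _ (hsub z hz) (by simpa using hgz))
      (fun z hz => hpos _ (hsub z hz)) (by simpa using hg₀) (by simpa using hh₀)
    simpa using this (-x) ⟨neg_lt_neg hx.2, neg_le_neg hxy⟩

theorem mul_sub_le_of_K_le {K Kp Kq : ℝ → ℝ → ℝ → ℝ}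
    (hKp : ∀ s p q, HasDerivAt (fun p' => K s p' q) (Kp s p q) p)
    (hKq : ∀ s p q, HasDerivAt (fun q' => K s p q') (Kq s p q) q) {s p₁ p₂ q₁ q₂ C c : ℝ}
    (hc : 0 ≤ c) (hC : ∀ p ∈ uIcc p₁ p₂, |Kp s p q₁| ≤ C) (hc' : ∀ q ∈ uIcc q₁ q₂, c ≤ Kq s p₂ q)
    (hle : K s p₁ q₁ ≤ K s p₂ q₂) : c * (q₁ - q₂) ≤ C * |p₂ - p₁| := by
  have hp : |K s p₂ q₁ - K s p₁ q₁| ≤ C * |p₂ - p₁| :=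
    (convex_uIcc p₁ p₂).norm_image_sub_le_of_norm_hasDerivWithin_le
      (fun p _ => (hKp s p q₁).hasDerivWithinAt) hC left_mem_uIcc right_mem_uIcc
  rcases le_total q₁ q₂ with hq | hq
  · have hC0 : 0 ≤ C := (abs_nonneg _).trans (hC p₁ left_mem_uIcc)
    nlinarith [abs_nonneg (p₂ - p₁)]
  · have hq' : c * (q₁ - q₂) ≤ K s p₂ q₁ - K s p₂ q₂ :=
      (convex_uIcc q₁ q₂).mul_sub_le_image_sub_of_le_deriv
        (fun q _ => (hKq s p₂ q).continuousAt.continuousWithinAt)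
        (fun q _ => (hKq s p₂ q).differentiableAt.differentiableWithinAt)
        (fun q hq => (hKq s p₂ q).deriv ▸ hc' q (interior_subset hq))
        q₂ right_mem_uIcc q₁ left_mem_uIcc hq
    linarith [le_abs_self (K s p₂ q₁ - K s p₁ q₁)]

theorem eq_of_K_le_of_touch {K Kp Kq : ℝ → ℝ → ℝ → ℝ}
    (hKp : ∀ s p q, HasDerivAt (fun p' => K s p' q) (Kp s p q) p)
    (hKq : ∀ s p q, HasDerivAt (fun q' => K s p q') (Kq s p q) q)
    (hKpc : Continuous fun x : ℝ × ℝ × ℝ => Kp x.1 x.2.1 x.2.2)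
    (hKqc : Continuous fun x : ℝ × ℝ × ℝ => Kq x.1 x.2.1 x.2.2)
    (hKqpos : ∀ s p q, 0 < Kq s p q)
    {ρ σ P Q A B : ℝ → ℝ} {z₁ z₂ y₀ m M : ℝ} (hm : 0 < m)
    (hρ : ∀ y ∈ Ioo z₁ z₂, HasDerivAt ρ (P y)⁻¹ y) (hσ : ∀ y ∈ Ioo z₁ z₂, HasDerivAt σ (Q y)⁻¹ y)
    (hP : ∀ y ∈ Ioo z₁ z₂, HasDerivAt P (A y * (P y)⁻¹) y)
    (hQ : ∀ y ∈ Ioo z₁ z₂, HasDerivAt Q (B y * (Q y)⁻¹) y)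
    (hPA : ∀ y ∈ Ioo z₁ z₂, P y ∈ Icc m M ∧ A y ∈ Icc (-M) M)
    (hQB : ∀ y ∈ Ioo z₁ z₂, Q y ∈ Icc m M ∧ B y ∈ Icc (-M) M)
    (hρσ : ∀ y ∈ Ioo z₁ z₂, ρ y ≤ σ y) (htouch : ∀ y ∈ Ioo z₁ z₂, ρ y = σ y → P y = Q y)
    (hK : ∀ y ∈ Ioo z₁ z₂, ρ y < σ y → K y (P y) (A y) ≤ K y (Q y) (B y))
    (hy₀ : y₀ ∈ Ioo z₁ z₂) (h₀ : ρ y₀ = σ y₀) :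
    ∀ y ∈ Ioo z₁ z₂, ρ y = σ y := by
  have hbox : IsCompact (Icc z₁ z₂ ×ˢ Icc m M ×ˢ Icc (-M) M) :=
    isCompact_Icc.prod (isCompact_Icc.prod isCompact_Icc)
  obtain ⟨C, hC⟩ := hbox.exists_bound_of_continuousOn hKpc.continuousOn
  obtain ⟨c, hc, hcKq⟩ := hbox.exists_forall_le' hKqc.continuousOn fun x _ => hKqpos _ _ _
  have hPpos : ∀ y ∈ Ioo z₁ z₂, 0 < P y := fun y hy => hm.trans_le (hPA y hy).1.1
  have hQpos : ∀ y ∈ Ioo z₁ z₂, 0 < Q y := fun y hy => hm.trans_le (hQB y hy).1.1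
  have hgrow : ∀ y ∈ Ioo z₁ z₂, Q y ^ 2 - P y ^ 2 ≠ 0 →
      -(C / (c * m) * |Q y ^ 2 - P y ^ 2|) ≤ 2 * B y - 2 * A y := by
    intro y hy hne
    obtain ⟨hPb, hAb⟩ := hPA y hy
    obtain ⟨hQb, hBb⟩ := hQB y hy
    have hy' : y ∈ Icc z₁ z₂ := Ioo_subset_Icc_self hy
    have hlt : ρ y < σ y := (hρσ y hy).lt_of_ne fun h => hne (by rw [htouch y hy h, sub_self])
    have hC0 : 0 ≤ C := (norm_nonneg _).trans (hC (y, P y, A y) ⟨hy', hPb, hAb⟩)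
    have hmvt : c * (A y - B y) ≤ C * |Q y - P y| :=
      mul_sub_le_of_K_le hKp hKq hc.le
        (fun p hp => hC (y, p, A y) ⟨hy', uIcc_subset_Icc hPb hQb hp, hAb⟩)
        (fun q hq => hcKq (y, Q y, q) ⟨hy', hQb, uIcc_subset_Icc hAb hBb hq⟩) (hK y hy hlt)
    have hsq : 2 * m * |Q y - P y| ≤ |Q y ^ 2 - P y ^ 2| := by
      rw [sq_sub_sq, abs_mul, abs_of_pos (add_pos (hQpos y hy) (hPpos y hy))]
      gcongr
      linarith [hPb.1, hQb.1]
    have : 2 * A y - 2 * B y ≤ C / (c * m) * |Q y ^ 2 - P y ^ 2| :=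
      calc 2 * A y - 2 * B y = 2 * (c * (A y - B y)) / c := by field_simp
        _ ≤ 2 * (C * |Q y - P y|) / c := by gcongr
        _ = C / (c * m) * (2 * m * |Q y - P y|) := by field_simp
        _ ≤ C / (c * m) * |Q y ^ 2 - P y ^ 2| := by gcongr
    linarith
  have hσρ := eq_zero_of_gronwall (g := fun y => Q y ^ 2 - P y ^ 2) (h := fun y => σ y - ρ y)
    hy₀ (fun y hy => ((hQ y hy).pow 2).sub ((hP y hy).pow 2) |>.congr_deriv (by
        field_simp [(hPpos y hy).ne', (hQpos y hy).ne']; ring))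
    (fun y hy => (hσ y hy).sub (hρ y hy)) hgrow
    (fun y hy hg => by
      have : Q y ≤ P y := (pow_le_pow_iff_left₀ (hQpos y hy).le (hPpos y hy).le two_ne_zero).1
        (by linarith)
      simpa using inv_anti₀ (hQpos y hy) this)
    (fun y hy hg => by
      have : P y ≤ Q y := (pow_le_pow_iff_left₀ (hPpos y hy).le (hQpos y hy).le two_ne_zero).1
        (by linarith)
      simpa using inv_anti₀ (hPpos y hy) this)
    (fun y hy => sub_nonneg.2 (hρσ y hy)) (by simp [htouch y₀ hy₀ h₀]) (sub_eq_zero.2 h₀.symm)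
  exact fun y hy => (sub_eq_zero.1 (hσρ y hy)).symm

section LevelParametrization

variable {f f' : ℝ → ℝ} {a c : ℝ}

theorem strictMonoOn_invFunOn_Icc (hac : a ≤ c) (hf : ContinuousOn f (Icc a c))
    (hmono : StrictMonoOn f (Icc a c)) : StrictMonoOn (invFunOn f (Icc a c)) (Icc (f a) (f c)) := by
  have hsurj := hf.surjOn_Icc (left_mem_Icc.2 hac) (right_mem_Icc.2 hac)
  intro y₁ hy₁ y₂ hy₂ hlt
  rwa [← hmono.lt_iff_lt (hsurj.mapsTo_invFunOn hy₁) (hsurj.mapsTo_invFunOn hy₂),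
    hsurj.rightInvOn_invFunOn hy₁, hsurj.rightInvOn_invFunOn hy₂]

theorem continuousAt_invFunOn_Icc (hac : a ≤ c) (hf : ContinuousOn f (Icc a c))
    (hmono : StrictMonoOn f (Icc a c)) {y : ℝ} (hy : y ∈ Ioo (f a) (f c)) :
    ContinuousAt (invFunOn f (Icc a c)) y := by
  have hsurj := hf.surjOn_Icc (left_mem_Icc.2 hac) (right_mem_Icc.2 hac)
  have hmem := hsurj.mapsTo_invFunOn (Ioo_subset_Icc_self hy)
  have hinv : f (invFunOn f (Icc a c) y) = y := hsurj.rightInvOn_invFunOn (Ioo_subset_Icc_self hy)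
  have hlo : a < invFunOn f (Icc a c) y := hmem.1.lt_of_ne fun h => hy.1.ne (by rw [h, hinv])
  have hhi : invFunOn f (Icc a c) y < c := hmem.2.lt_of_ne fun h => hy.2.ne (by rw [← h, hinv])
  refine (strictMonoOn_invFunOn_Icc hac hf hmono).continuousAt_of_image_mem_nhds
    (Icc_mem_nhds hy.1 hy.2) (mem_of_superset (Icc_mem_nhds hlo hhi) fun t ht => ?_)
  exact ⟨f t, ⟨hmono.monotoneOn (left_mem_Icc.2 hac) ht ht.1,
    hmono.monotoneOn ht (right_mem_Icc.2 hac) ht.2⟩, hmono.injOn.leftInvOn_invFunOn ht⟩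

theorem strictMonoOn_Icc_of_hasDerivAt_pos (hf : ∀ t ∈ Icc a c, HasDerivAt f (f' t) t)
    (hpos : ∀ t ∈ Icc a c, 0 < f' t) : StrictMonoOn f (Icc a c) :=
  strictMonoOn_of_hasDerivWithinAt_pos (convex_Icc a c)
    (fun t ht => (hf t ht).continuousAt.continuousWithinAt)
    (fun t ht => (hf t (interior_subset ht)).hasDerivWithinAt)
    (fun t ht => hpos t (interior_subset ht))

theorem invFunOn_Icc_spec (hac : a ≤ c) (hf : ∀ t ∈ Icc a c, HasDerivAt f (f' t) t)
    (hpos : ∀ t ∈ Icc a c, 0 < f' t) {y : ℝ} (hy : y ∈ Ioo (f a) (f c)) :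
    invFunOn f (Icc a c) y ∈ Icc a c ∧ f (invFunOn f (Icc a c) y) = y ∧
      HasDerivAt (invFunOn f (Icc a c)) (f' (invFunOn f (Icc a c) y))⁻¹ y := by
  have hcont : ContinuousOn f (Icc a c) := fun t ht => (hf t ht).continuousAt.continuousWithinAt
  have hsurj := hcont.surjOn_Icc (left_mem_Icc.2 hac) (right_mem_Icc.2 hac)
  have hmem := hsurj.mapsTo_invFunOn (Ioo_subset_Icc_self hy)
  refine ⟨hmem, hsurj.rightInvOn_invFunOn (Ioo_subset_Icc_self hy), ?_⟩
  exact (hf _ hmem).of_local_left_inverse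
    (continuousAt_invFunOn_Icc hac hcont (strictMonoOn_Icc_of_hasDerivAt_pos hf hpos) hy)
    (hpos _ hmem).ne' <| mem_of_superset (Ioo_mem_nhds hy.1 hy.2) fun _ hz =>
      hsurj.rightInvOn_invFunOn (Ioo_subset_Icc_self hz)

end LevelParametrization

theorem hasDerivAt_deriv_of_contDiffOn {f : ℝ → ℝ} {s : Set ℝ} (hf : ContDiffOn ℝ 2 f s)
    (hs : IsOpen s) {t : ℝ} (ht : t ∈ s) :
    HasDerivAt f (deriv f t) t ∧ HasDerivAt (deriv f) (deriv (deriv f) t) t := by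
  have hf₁ : ContDiffOn ℝ 1 (deriv f) s := hf.deriv_of_isOpen hs (by norm_num)
  exact ⟨(hf.differentiableOn (by norm_num)).hasDerivAt (hs.mem_nhds ht),
    (hf₁.differentiableOn one_ne_zero).hasDerivAt (hs.mem_nhds ht)⟩

theorem eventually_deriv_mem_Icc {f : ℝ → ℝ} {s : Set ℝ} (hf : ContDiffOn ℝ 2 f s)
    (hs : IsOpen s) {t m M : ℝ} (ht : t ∈ s) (hm : m < deriv f t) (hM : deriv f t < M)
    (hM' : |deriv (deriv f) t| < M) :
    ∀ᶠ x in 𝓝 t, deriv f x ∈ Icc m M ∧ deriv (deriv f) x ∈ Icc (-M) M := by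
  have hf₁ : ContDiffOn ℝ 1 (deriv f) s := hf.deriv_of_isOpen hs (by norm_num)
  exact ((hasDerivAt_deriv_of_contDiffOn hf hs ht).2.continuousAt.eventually_mem
    (Icc_mem_nhds hm hM)).and <|
    ((hf₁.continuousOn_deriv_of_isOpen hs le_rfl).continuousAt (hs.mem_nhds ht)).eventually_mem
      (Icc_mem_nhds (abs_lt.1 hM').1 (abs_lt.1 hM').2)

theorem eq_of_hasDerivAt_of_eventually_le {u v : ℝ → ℝ} {u' v' t : ℝ} (hu : HasDerivAt u u' t)
    (hv : HasDerivAt v v' t) (hle : ∀ᶠ x in 𝓝 t, v x ≤ u x) (heq : u t = v t) : u' = v' := by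
  have hmin : IsLocalMin (fun x => u x - v x) t := hle.mono fun x hx => by
    simp only [heq, sub_self, sub_nonneg, hx]
  linarith [hmin.hasDerivAt_eq_zero (hu.sub hv)]

theorem invFunOn_eq_of_touch {K Kp Kq : ℝ → ℝ → ℝ → ℝ}
    (hKp : ∀ s p q, HasDerivAt (fun p' => K s p' q) (Kp s p q) p)
    (hKq : ∀ s p q, HasDerivAt (fun q' => K s p q') (Kq s p q) q)
    (hKpc : Continuous fun x : ℝ × ℝ × ℝ => Kp x.1 x.2.1 x.2.2)
    (hKqc : Continuous fun x : ℝ × ℝ × ℝ => Kq x.1 x.2.1 x.2.2)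
    (hKqpos : ∀ s p q, 0 < Kq s p q)
    {b : ℝ} {u v : ℝ → ℝ} (hu : ContDiffOn ℝ 2 u (Ioo 0 b)) (hv : ContDiffOn ℝ 2 v (Ioo 0 b))
    (huv : ∀ t ∈ Ioo 0 b, v t ≤ u t)
    (hmain : ∀ t s : ℝ, 0 < t → t < s → s < b → u t = v s →
      K (u t) (deriv u t) (deriv (deriv u) t) ≤ K (v s) (deriv v s) (deriv (deriv v) s))
    {a c m M y₀ : ℝ} (hac : a ≤ c) (hm : 0 < m) (hsub : Icc a c ⊆ Ioo 0 b)
    (hbu : ∀ t ∈ Icc a c, deriv u t ∈ Icc m M ∧ deriv (deriv u) t ∈ Icc (-M) M)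
    (hbv : ∀ t ∈ Icc a c, deriv v t ∈ Icc m M ∧ deriv (deriv v) t ∈ Icc (-M) M)
    (hy₀ : y₀ ∈ Ioo (max (u a) (v a)) (min (u c) (v c)))
    (h₀ : invFunOn u (Icc a c) y₀ = invFunOn v (Icc a c) y₀) :
    ∀ y ∈ Ioo (max (u a) (v a)) (min (u c) (v c)),
      invFunOn u (Icc a c) y = invFunOn v (Icc a c) y := by
  have hud := fun t (ht : t ∈ Icc a c) => hasDerivAt_deriv_of_contDiffOn hu isOpen_Ioo (hsub ht)
  have hvd := fun t (ht : t ∈ Icc a c) => hasDerivAt_deriv_of_contDiffOn hv isOpen_Ioo (hsub ht)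
  have hpu : ∀ t ∈ Icc a c, 0 < deriv u t := fun t ht => hm.trans_le (hbu t ht).1.1
  have hpv : ∀ t ∈ Icc a c, 0 < deriv v t := fun t ht => hm.trans_le (hbv t ht).1.1
  set ρ := invFunOn u (Icc a c)
  set σ := invFunOn v (Icc a c)
  set I := Ioo (max (u a) (v a)) (min (u c) (v c))
  obtain ⟨hρ, huρ, hρ'⟩ : (∀ y ∈ I, ρ y ∈ Icc a c) ∧ (∀ y ∈ I, u (ρ y) = y) ∧
      ∀ y ∈ I, HasDerivAt ρ (deriv u (ρ y))⁻¹ y := by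
    simp only [← forall₂_and]
    exact fun y hy => invFunOn_Icc_spec hac (fun t ht => (hud t ht).1) hpu
      ⟨(le_max_left _ _).trans_lt hy.1, hy.2.trans_le (min_le_left _ _)⟩
  obtain ⟨hσ, hvσ, hσ'⟩ : (∀ y ∈ I, σ y ∈ Icc a c) ∧ (∀ y ∈ I, v (σ y) = y) ∧
      ∀ y ∈ I, HasDerivAt σ (deriv v (σ y))⁻¹ y := by
    simp only [← forall₂_and]
    exact fun y hy => invFunOn_Icc_spec hac (fun t ht => (hvd t ht).1) hpv
      ⟨(le_max_right _ _).trans_lt hy.1, hy.2.trans_le (min_le_right _ _)⟩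
  -- `v (σ y) = u (ρ y) ≥ v (ρ y)` and `v` is increasing
  have hρσ : ∀ y ∈ I, ρ y ≤ σ y := fun y hy => not_lt.1 fun hlt => by
    linarith [strictMonoOn_Icc_of_hasDerivAt_pos (fun t ht => (hvd t ht).1) hpv (hσ y hy)
      (hρ y hy) hlt, huv _ (hsub (hρ y hy)), huρ y hy, hvσ y hy]
  exact eq_of_K_le_of_touch hKp hKq hKpc hKqc hKqpos (ρ := ρ) (σ := σ)
    (P := deriv u ∘ ρ) (Q := deriv v ∘ σ) (A := deriv (deriv u) ∘ ρ) (B := deriv (deriv v) ∘ σ)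
    hm hρ' hσ' (fun y hy => (hud _ (hρ y hy)).2.comp y (hρ' y hy))
    (fun y hy => (hvd _ (hσ y hy)).2.comp y (hσ' y hy))
    (fun y hy => hbu _ (hρ y hy)) (fun y hy => hbv _ (hσ y hy)) hρσ
    (fun y hy h => eq_of_hasDerivAt_of_eventually_le (hud _ (hρ y hy)).1
      (h ▸ (hvd _ (hσ y hy)).1) (eventually_of_mem (isOpen_Ioo.mem_nhds (hsub (hρ y hy))) huv)
      (by rw [huρ y hy, h, hvσ y hy]))
    (fun y hy h => by
      simpa only [comp_apply, huρ y hy, hvσ y hy] using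
        hmain (ρ y) (σ y) (hsub (hρ y hy)).1 h (hsub (hσ y hy)).2 (by rw [huρ y hy, hvσ y hy]))
    hy₀ h₀

theorem eventually_eq_of_touch {K Kp Kq : ℝ → ℝ → ℝ → ℝ}
    (hKp : ∀ s p q, HasDerivAt (fun p' => K s p' q) (Kp s p q) p)
    (hKq : ∀ s p q, HasDerivAt (fun q' => K s p q') (Kq s p q) q)
    (hKpc : Continuous fun x : ℝ × ℝ × ℝ => Kp x.1 x.2.1 x.2.2)
    (hKqc : Continuous fun x : ℝ × ℝ × ℝ => Kq x.1 x.2.1 x.2.2)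
    (hKqpos : ∀ s p q, 0 < Kq s p q)
    {b : ℝ} {u v : ℝ → ℝ} (hu : ContDiffOn ℝ 2 u (Ioo 0 b)) (hv : ContDiffOn ℝ 2 v (Ioo 0 b))
    (huv : ∀ t ∈ Ioo 0 b, v t ≤ u t)
    (hmono : ∀ t ∈ Ioo 0 b, 0 < max (deriv u t) (deriv v t))
    (hmain : ∀ t s : ℝ, 0 < t → t < s → s < b → u t = v s →
      K (u t) (deriv u t) (deriv (deriv u) t) ≤ K (v s) (deriv v s) (deriv (deriv v) s))
    {t₀ : ℝ} (ht₀ : t₀ ∈ Ioo 0 b) (heq : u t₀ = v t₀) : ∀ᶠ t in 𝓝 t₀, u t = v t := by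
  have hud : ∀ t ∈ Ioo 0 b, HasDerivAt u (deriv u t) t := fun t ht =>
    (hasDerivAt_deriv_of_contDiffOn hu isOpen_Ioo ht).1
  have hvd : ∀ t ∈ Ioo 0 b, HasDerivAt v (deriv v t) t := fun t ht =>
    (hasDerivAt_deriv_of_contDiffOn hv isOpen_Ioo ht).1
  have hp₀ : deriv u t₀ = deriv v t₀ := eq_of_hasDerivAt_of_eventually_le (hud t₀ ht₀)
    (hvd t₀ ht₀) (eventually_of_mem (isOpen_Ioo.mem_nhds ht₀) huv) heq
  obtain ⟨m, hm, hmu⟩ := exists_between (by simpa [← hp₀] using hmono t₀ ht₀)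
  obtain ⟨M, hM⟩ := exists_gt (max (deriv u t₀) (max |deriv (deriv u) t₀| |deriv (deriv v) t₀|))
  rw [max_lt_iff, max_lt_iff] at hM
  obtain ⟨a, c, -, hnhds, hsub⟩ := exists_Icc_mem_subset_of_mem_nhds <|
    (isOpen_Ioo.eventually_mem ht₀).and <|
      (eventually_deriv_mem_Icc hu isOpen_Ioo ht₀ hmu hM.1 hM.2.1).and
      (eventually_deriv_mem_Icc hv isOpen_Ioo ht₀ (hp₀ ▸ hmu) (hp₀ ▸ hM.1) hM.2.2)
  have ht₀ac : t₀ ∈ Ioo a c := by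
    rw [← interior_Icc]
    exact mem_interior_iff_mem_nhds.2 hnhds
  have ht₀' : t₀ ∈ Icc a c := Ioo_subset_Icc_self ht₀ac
  have hac : a ≤ c := (ht₀ac.1.trans ht₀ac.2).le
  have ha : a ∈ Icc a c := left_mem_Icc.2 hac
  have hc : c ∈ Icc a c := right_mem_Icc.2 hac
  have hpu : ∀ t ∈ Icc a c, 0 < deriv u t := fun t ht => hm.trans_le (hsub ht).2.1.1.1
  have hpv : ∀ t ∈ Icc a c, 0 < deriv v t := fun t ht => hm.trans_le (hsub ht).2.2.1.1
  have hmu := strictMonoOn_Icc_of_hasDerivAt_pos (fun t ht => hud t (hsub ht).1) hpu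
  have hmv := strictMonoOn_Icc_of_hasDerivAt_pos (fun t ht => hvd t (hsub ht).1) hpv
  have hy₀ : u t₀ ∈ Ioo (max (u a) (v a)) (min (u c) (v c)) :=
    ⟨max_lt (hmu ha ht₀' ht₀ac.1) (heq ▸ hmv ha ht₀' ht₀ac.1),
      lt_min (hmu ht₀' hc ht₀ac.2) (heq ▸ hmv ht₀' hc ht₀ac.2)⟩
  have hinv := invFunOn_eq_of_touch hKp hKq hKpc hKqc hKqpos hu hv huv hmain hac hm
    (fun t ht => (hsub ht).1) (fun t ht => (hsub ht).2.1) (fun t ht => (hsub ht).2.2) hy₀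
    (by rw [hmu.injOn.leftInvOn_invFunOn ht₀', heq, hmv.injOn.leftInvOn_invFunOn ht₀'])
  filter_upwards [Ioo_mem_nhds ht₀ac.1 ht₀ac.2,
    (hud t₀ ht₀).continuousAt.preimage_mem_nhds (Ioo_mem_nhds hy₀.1 hy₀.2)] with t ht hut
  have hvσ := (invFunOn_Icc_spec hac (fun t ht => hvd t (hsub ht).1) hpv
    ⟨(le_max_right _ _).trans_lt hut.1, hut.2.trans_le (min_le_right _ _)⟩).2.1
  rwa [← hinv _ hut, hmu.injOn.leftInvOn_invFunOn (Ioo_subset_Icc_self ht), eq_comm] at hvσ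

end LiNirenberg

theorem stmt_10_general (K Kp Kq : ℝ → ℝ → ℝ → ℝ)
    (hKp : ∀ s p q : ℝ, HasDerivAt (fun p' => K s p' q) (Kp s p q) p)
    (hKq : ∀ s p q : ℝ, HasDerivAt (fun q' => K s p q') (Kq s p q) q)
    (hKpc : Continuous fun x : ℝ × ℝ × ℝ => Kp x.1 x.2.1 x.2.2)
    (hKqc : Continuous fun x : ℝ × ℝ × ℝ => Kq x.1 x.2.1 x.2.2)
    (hKqpos : ∀ s p q : ℝ, 0 < Kq s p q)
    (b : ℝ) (u v : ℝ → ℝ)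
    (hu2 : ContDiffOn ℝ 2 u (Set.Ioo 0 b)) (hv2 : ContDiffOn ℝ 2 v (Set.Ioo 0 b))
    (huv : ∀ t ∈ Set.Ioo 0 b, v t ≤ u t)
    (hmono : ∀ t ∈ Set.Ioo 0 b, 0 < max (deriv u t) (deriv v t))
    (hmain : ∀ t s : ℝ, 0 < t → t < s → s < b → u t = v s →
      K (u t) (deriv u t) (deriv (deriv u) t) ≤ K (v s) (deriv v s) (deriv (deriv v) s)) :
    (∀ t ∈ Set.Ioo 0 b, v t < u t) ∨ (∀ t ∈ Set.Ioo 0 b, u t = v t) := by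
  set S := Ioo 0 b ∩ (fun t => u t - v t) ⁻¹' Ioi 0
  set E := {t | ∀ᶠ x in 𝓝 t, u x = v x}
  have hS : IsOpen S :=
    (hu2.continuousOn.sub hv2.continuousOn).isOpen_inter_preimage isOpen_Ioo isOpen_Ioi
  have hdisj : Disjoint S E :=
    disjoint_left.2 fun t ht hE => by simp [S, hE.self_of_nhds] at ht
  have hcover : Ioo 0 b ⊆ S ∪ E := fun t ht =>
    (huv t ht).lt_or_eq.imp (fun h => ⟨ht, sub_pos.2 h⟩) fun h =>
      LiNirenberg.eventually_eq_of_touch hKp hKq hKpc hKqc hKqpos hu2 hv2 huv hmono hmain ht h.symm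
  rcases isPreconnected_Ioo.subset_or_subset hS isOpen_setOfPred_eventually_nhds hdisj hcover
    with h | h
  · exact Or.inl fun t ht => sub_pos.1 (h ht).2
  · exact Or.inr fun t ht => (h ht).self_of_nhds

/-- Lemma 5.1 of Li–Nirenberg, extending Lemma 2.1 to general second order operators. -/
theorem stmt_10 (K Kp Kq : ℝ → ℝ → ℝ → ℝ)
    (hK : Continuous fun x : ℝ × ℝ × ℝ => K x.1 x.2.1 x.2.2)
    (hKp : ∀ s p q : ℝ, HasDerivAt (fun p' => K s p' q) (Kp s p q) p)
    (hKq : ∀ s p q : ℝ, HasDerivAt (fun q' => K s p q') (Kq s p q) q)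
    (hKpc : Continuous fun x : ℝ × ℝ × ℝ => Kp x.1 x.2.1 x.2.2)
    (hKqc : Continuous fun x : ℝ × ℝ × ℝ => Kq x.1 x.2.1 x.2.2)
    (hKqpos : ∀ s p q : ℝ, 0 < Kq s p q)
    (b : ℝ) (hb : 0 < b) (u v : ℝ → ℝ)
    (hu2 : ContDiffOn ℝ 2 u (Set.Ioo 0 b)) (hv2 : ContDiffOn ℝ 2 v (Set.Ioo 0 b))
    (huv : ∀ t ∈ Set.Ioo 0 b, v t ≤ u t)
    (hmono : ∀ t ∈ Set.Ioo 0 b, 0 < max (deriv u t) (deriv v t))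
    (hmain : ∀ t s : ℝ, 0 < t → t < s → s < b → u t = v s →
      K (u t) (deriv u t) (deriv (deriv u) t) ≤ K (v s) (deriv v s) (deriv (deriv v) s)) :
    (∀ t ∈ Set.Ioo 0 b, v t < u t) ∨ (∀ t ∈ Set.Ioo 0 b, u t = v t) :=
  stmt_10_general K Kp Kq hKp hKq hKpc hKqc hKqpos b u v hu2 hv2 huv hmono hmain
end
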